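/- Fix n ≥ 1, a subset I = {i_1 < … < i_r} ⊆ {1,…,n} and j ∈ {1,…,n}∖I. If two Gauss diagrams G and G' on n strings are related by a single Reidemeister move Ω1, Ω2 or Ω3, then Z_{I,j}(G) = Z_{I,j}(G'). Consequently the tree invariant Z_{I,j} is well defined on ordered virtual tangles on n strings (equivalence classes of Gauss diagrams modulo these moves), and in particular is an isotopy invariant of ordered classical tangles. -/

import Mathlib

/-!
Combinatorial Gauss diagrams on `n` strings and the tree invariants `Z I j`.

A Gauss diagram is encoded by a finite set of arrows; each arrow records the
string (an element of `Fin n`) and the position (a rational number, increasing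
in the direction of the orientation of the string) of its tail and of its head,
together with a sign `±1`.  Only the induced combinatorial data (linear order of
the endpoints along each string, the tail/head pairing and the signs) is ever
used by the definitions below.

The tree invariant `Z I j G = ∑_{A ∈ 𝒜_{I,j}} sign(A) ⟨A, G⟩` is computed as a
signed count over all subsets `S` of the arrows of `G` that form a planar tree
diagram with leaves on `I` and trunk on `j`: each pair `(A, φ)` of a planar tree
diagram `A ∈ 𝒜_{I,j}` together with an embedding `φ : A → G` corresponds
bijectively to the subset `S = Im φ` of the arrows of `G`, which is itself a
planar tree diagram with leaves on `I` and trunk on `j`; the contribution of the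
pair to the sum is `sign(A) · sign(φ) = (-1)^{#right-pointing arrows of S} · ∏_{a ∈ S} sign(a)`.
-/

open scoped Classical

/-- An arrow of a Gauss diagram on `n` strings: a tail endpoint, a head
endpoint (each given by the string it lies on and its position along that
string) and a sign. -/
structure GArrow (n : ℕ) where
  tailStr : Fin n
  tailPos : ℚ
  headStr : Fin n
  headPos : ℚ
  sign : ℤ
deriving DecidableEq

namespace GArrow

/-- The two endpoints of an arrow: `false` is the tail, `true` is the head. -/
def ep {n : ℕ} (a : GArrow n) : Bool → Fin n × ℚ
  | false => (a.tailStr, a.tailPos)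
  | true => (a.headStr, a.headPos)

end GArrow

/-- A Gauss diagram on `n` strings: a finite set of signed arrows with all
endpoints pairwise distinct, and all signs equal to `±1`. -/
structure GaussDiagram (n : ℕ) where
  arrows : Finset (GArrow n)
  sign_pm : ∀ a ∈ arrows, a.sign = 1 ∨ a.sign = -1
  endpoints_distinct : ∀ a ∈ arrows, ∀ b ∈ arrows, ∀ s t : Bool,
    a.ep s = b.ep t → a = b ∧ s = t

/-- `S` is a tree diagram with leaves on `I` and trunk on `j`:
* the head and the tail of every arrow lie on different strings;
* for each `i ∈ I` there is exactly one arrow tail on string `i`, and there are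
  no arrow tails on strings outside `I`;
* every arrow head lies on a string of `I ∪ {j}`;
* on each string `i ∈ I` all arrow heads precede the unique arrow tail. -/
def IsTreeDiagram {n : ℕ} (I : Finset (Fin n)) (j : Fin n)
    (S : Finset (GArrow n)) : Prop :=
  (∀ a ∈ S, a.tailStr ≠ a.headStr) ∧
  (∀ i ∈ I, ∃! a, a ∈ S ∧ a.tailStr = i) ∧
  (∀ a ∈ S, a.tailStr ∈ I) ∧
  (∀ a ∈ S, a.headStr ∈ I ∨ a.headStr = j) ∧
  (∀ a ∈ S, ∀ b ∈ S, a.headStr = b.tailStr → a.headPos < b.tailPos)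

/-- `ParentRel S s t` : string `s` is the parent of string `t` in the rooted
tree determined by the tree diagram `S`, i.e. the (unique) arrow with tail on
`t` has its head on `s`. -/
def ParentRel {n : ℕ} (S : Finset (GArrow n)) (s t : Fin n) : Prop :=
  ∃ a ∈ S, a.tailStr = t ∧ a.headStr = s

/-- `Descends S s k` : string `k` belongs to the subtree of string `s` (it is
`s` itself or an iterated child of `s`). -/
def Descends {n : ℕ} (S : Finset (GArrow n)) : Fin n → Fin n → Prop :=
  Relation.ReflTransGen (ParentRel S)

/-- `S` is a *planar* tree diagram with leaves on `I` and trunk on `j`: the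
rooted tree `T_S` determined by `S` can be drawn in the plane so that the
clockwise order of its leaves, starting from the root on string `j`, is the
order of the string numbers.  Combinatorially this says that:
* the parent relation makes the strings carrying the arrows into a tree rooted
  at `j` (every leaf string is an iterated child of `j`);
* the whole subtree hanging from an arrow lies on the same side of the string
  carrying the head of that arrow as its tail does;
* two subtrees hanging on the same side of a common string are ordered, along
  that string, compatibly with the order of the strings: for two arrow heads on
  the same string, with both tails on the left, the subtree attached closer to
  the beginning of the string is the one carrying the larger string numbers,
  while for two tails on the right it is the one carrying the smaller string
  numbers. -/
def IsPlanarTreeDiagram {n : ℕ} (I : Finset (Fin n)) (j : Fin n)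
    (S : Finset (GArrow n)) : Prop :=
  IsTreeDiagram I j S ∧
  (∀ i ∈ I, Relation.TransGen (ParentRel S) j i) ∧
  (∀ a ∈ S, ∀ k : Fin n, Descends S a.tailStr k →
    (a.tailStr < a.headStr ↔ k < a.headStr)) ∧
  (∀ a ∈ S, ∀ b ∈ S, a.headStr = b.headStr → a.headPos < b.headPos →
    ∀ k k' : Fin n, Descends S a.tailStr k → Descends S b.tailStr k' →
      ((a.tailStr < a.headStr → b.tailStr < b.headStr → k' < k) ∧
       (a.headStr < a.tailStr → b.headStr < b.tailStr → k < k')))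

/-- The sign `(-1)^q` of an (embedded) arrow diagram, where `q` is the number
of right-pointing arrows (tail on a string of smaller number than the head). -/
noncomputable def treeSign {n : ℕ} (S : Finset (GArrow n)) : ℤ :=
  (-1) ^ (S.filter fun a => a.tailStr < a.headStr).card

/-- The tree invariant `Z_{I,j}(G) = ∑_{A ∈ 𝒜_{I,j}} sign(A)·⟨A,G⟩`, computed
as the signed count of embedded planar tree diagrams with leaves on `I` and
trunk on `j` inside `G`.  In particular `Z ∅ j G = 1` (only `S = ∅`
contributes). -/
noncomputable def Z {n : ℕ} (I : Finset (Fin n)) (j : Fin n)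
    (G : GaussDiagram n) : ℤ :=
  ∑ S ∈ G.arrows.powerset,
    if IsPlanarTreeDiagram I j S then treeSign S * ∏ a ∈ S, a.sign else 0

/-- The two points at positions `p` and `q` on string `str` are adjacent in the
Gauss diagram `G`: no arrow endpoint of `G` lies strictly between them. -/
def IsAdjacentPair {n : ℕ} (G : GaussDiagram n) (str : Fin n) (p q : ℚ) : Prop :=
  p ≠ q ∧ ∀ c ∈ G.arrows, ∀ s : Bool, (c.ep s).1 = str →
    ¬(min p q < (c.ep s).2 ∧ (c.ep s).2 < max p q)

/-- The sign `±1` associated to a Boolean. -/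
def bsign (b : Bool) : ℤ := if b then 1 else -1

/-- The arrow with endpoints `(s1, p1)` and `(s2, p2)` and sign `sg`, whose
tail is on `s1` if `d = true` and on `s2` if `d = false`. -/
def mkDirArrow {n : ℕ} (d : Bool) (s1 : Fin n) (p1 : ℚ) (s2 : Fin n) (p2 : ℚ)
    (sg : ℤ) : GArrow n :=
  if d then ⟨s1, p1, s2, p2, sg⟩ else ⟨s2, p2, s1, p1, sg⟩

/-- First Reidemeister move (deletion direction): `G'` is obtained from `G` by
deleting one arrow whose two endpoints are adjacent on a single string. -/
def Omega1Del {n : ℕ} (G G' : GaussDiagram n) : Prop :=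
  ∃ a ∈ G.arrows, a.tailStr = a.headStr ∧
    IsAdjacentPair G a.tailStr a.tailPos a.headPos ∧
    G'.arrows = G.arrows.erase a

/-- First Reidemeister move: insertion or deletion of an isolated arrow with
both (adjacent) endpoints on a single string. -/
def Omega1Rel {n : ℕ} (G G' : GaussDiagram n) : Prop :=
  Omega1Del G G' ∨ Omega1Del G' G

/-- Second Reidemeister move (deletion direction): `G'` is obtained from `G` by
deleting a pair of arrows of opposite signs joining the same two strings in the
same direction, whose tails are adjacent and whose heads are adjacent, the
arrow whose tail comes first being the one whose head comes second. -/
def Omega2Del {n : ℕ} (G G' : GaussDiagram n) : Prop :=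
  ∃ a ∈ G.arrows, ∃ b ∈ G.arrows, a ≠ b ∧
    a.tailStr = b.tailStr ∧ a.headStr = b.headStr ∧ a.sign = -b.sign ∧
    IsAdjacentPair G a.tailStr a.tailPos b.tailPos ∧
    IsAdjacentPair G a.headStr a.headPos b.headPos ∧
    ((a.tailPos < b.tailPos ∧ b.headPos < a.headPos) ∨
     (b.tailPos < a.tailPos ∧ a.headPos < b.headPos)) ∧
    G'.arrows = (G.arrows.erase a).erase b

/-- Second Reidemeister move: insertion or deletion of such a pair of arrows. -/
def Omega2Rel {n : ℕ} (G G' : GaussDiagram n) : Prop :=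
  Omega2Del G G' ∨ Omega2Del G' G

/-- Third Reidemeister move on Gauss diagrams: three string fragments (on the
strings `sX`, `sY`, `sZ`, not necessarily distinct) carry the six endpoints of
three arrows `a` (joining the first and second fragments), `b` (first and
third) and `c` (second and third); on each fragment the two endpoints are
adjacent, and the move simultaneously transposes the two endpoints on each
fragment, preserving the directions and the signs of the three arrows.

Exactly the configurations arising from the oriented third Reidemeister move on
tangle diagrams (sliding the first strand, which passes entirely over or
entirely under the other two, across the crossing of the other two strands) are
allowed; they are parametrised by the five Booleans `u` (the sliding strand
passes over), `w` (the second strand passes over the third at their crossing)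
and `ox`, `oy`, `oz` (the orientations of the three strands in the standard
local picture), which determine the directions, the signs and the mutual order
of the endpoints of the three arrows, as obtained by computing the writhes in
the local picture. -/
def Omega3Rel {n : ℕ} (G G' : GaussDiagram n) : Prop :=
  ∃ (sX sY sZ : Fin n) (xa xb ya yc zb zc : ℚ) (u w ox oy oz : Bool),
    mkDirArrow u sX xa sY ya (bsign u * bsign ox * bsign oy) ∈ G.arrows ∧
    mkDirArrow u sX xb sZ zb (-(bsign u * bsign ox * bsign oz)) ∈ G.arrows ∧
    mkDirArrow w sY yc sZ zc (-(bsign w * bsign oy * bsign oz)) ∈ G.arrows ∧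
    (if ox then xa < xb else xb < xa) ∧
    (if oy then ya < yc else yc < ya) ∧
    (if oz then zc < zb else zb < zc) ∧
    IsAdjacentPair G sX xa xb ∧ IsAdjacentPair G sY ya yc ∧
    IsAdjacentPair G sZ zb zc ∧
    G'.arrows =
      (((G.arrows.erase
            (mkDirArrow u sX xa sY ya (bsign u * bsign ox * bsign oy))).erase
            (mkDirArrow u sX xb sZ zb (-(bsign u * bsign ox * bsign oz)))).erase
            (mkDirArrow w sY yc sZ zc (-(bsign w * bsign oy * bsign oz)))) ∪
        {mkDirArrow u sX xb sY yc (bsign u * bsign ox * bsign oy),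
         mkDirArrow u sX xa sZ zc (-(bsign u * bsign ox * bsign oz)),
         mkDirArrow w sY ya sZ zb (-(bsign w * bsign oy * bsign oz))}

/-- A single Reidemeister move on Gauss diagrams. -/
def ReidMove {n : ℕ} (G G' : GaussDiagram n) : Prop :=
  Omega1Rel G G' ∨ Omega2Rel G G' ∨ Omega3Rel G G'

/-!
`Z I j G` is a signed count of the subsets of arrows of `G` forming planar tree diagrams, so each
move is handled by sorting these subsets according to which of the moved arrows they contain; a
subset containing none of them contributes the same before and after the move.

A tree diagram has no arrow with both ends on one string and at most one tail on each string. So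
the arrow created by `Ω1` occurs in no tree diagram, and neither do both arrows of `Ω2`; exchanging
one arrow of `Ω2` for the other preserves the relative order of all endpoints, hence planarity, and
only flips the sign. The three arrows of `Ω3` run from a string `E` to `T`, from `M` to `T` and from
`E` to `M`. Again the two arrows leaving `E` never occur together, and a single arrow is matched
with its moved copy. The remaining subsets contain either the "sibling" pair hanging `E` and `M`
next to each other on `T`, or the "chain" `E → M → T`. When `E` and `M` lie on opposite sides of
`T`, no chain is planar and the two sibling pairs are planar together. When they lie on the same
side, planarity forces the order of the heads on `T` and on `M`, so only one sibling pair and one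
chain can be planar, and they are planar together; the sign condition of `Ω3` is exactly what
makes the contributions before and after the move agree.
-/

open Finset Relation

namespace GaussDiagram

variable {n : ℕ} (G : GaussDiagram n)

lemma eq_of_ep_eq {a b : GArrow n} (ha : a ∈ G.arrows) (hb : b ∈ G.arrows) {s t : Bool}
    (h : a.ep s = b.ep t) : a = b :=
  (G.endpoints_distinct a ha b hb s t h).1

lemma notMem_of_ep_eq {R : Finset (GArrow n)} (hR : R ⊆ G.arrows) {x : GArrow n}
    (hx : x ∈ G.arrows) (hxR : x ∉ R) {y : GArrow n} {s t : Bool} (h : y.ep s = x.ep t) :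
    y ∉ R :=
  fun hy => hxR (G.eq_of_ep_eq (hR hy) hx h ▸ hy)

lemma tail_ne_head {a b : GArrow n} (ha : a ∈ G.arrows) (hb : b ∈ G.arrows) :
    a.ep false ≠ b.ep true :=
  fun h => Bool.noConfusion (G.endpoints_distinct a ha b hb false true h).2

end GaussDiagram

section Hulls

variable {n : ℕ}

def AvoidsHull (R : Finset (GArrow n)) (str : Fin n) (P : Finset ℚ) : Prop :=
  ∀ r ∈ R, ∀ s : Bool, (r.ep s).1 = str →
    (∀ p ∈ P, (r.ep s).2 < p) ∨ (∀ p ∈ P, p < (r.ep s).2)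

namespace AvoidsHull

variable {R R' : Finset (GArrow n)} {str : Fin n} {P Q : Finset ℚ}

lemma subset_arrows (h : AvoidsHull R str P) (hR : R' ⊆ R) : AvoidsHull R' str P :=
  fun r hr => h r (hR hr)

lemma subset_positions (h : AvoidsHull R str P) (hQ : ∀ p ∈ Q, p ∈ P) : AvoidsHull R str Q :=
  fun r hr s hs => (h r hr s hs).imp (fun h p hp => h p (hQ p hp)) (fun h p hp => h p (hQ p hp))

lemma lt_iff (h : AvoidsHull R str P) {r : GArrow n} (hr : r ∈ R) {s : Bool}
    (hs : (r.ep s).1 = str) {p q : ℚ} (hp : p ∈ P) (hq : q ∈ P) :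
    ((r.ep s).2 < p ↔ (r.ep s).2 < q) ∧ (p < (r.ep s).2 ↔ q < (r.ep s).2) := by
  rcases h r hr s hs with h | h
  · exact ⟨iff_of_true (h p hp) (h q hq), iff_of_false (h p hp).asymm (h q hq).asymm⟩
  · exact ⟨iff_of_false (h p hp).asymm (h q hq).asymm, iff_of_true (h p hp) (h q hq)⟩

lemma lt_iff_pair {p q : ℚ} (h : AvoidsHull R str {p, q}) {r : GArrow n} (hr : r ∈ R)
    {s : Bool} (hs : (r.ep s).1 = str) :
    ((r.ep s).2 < p ↔ (r.ep s).2 < q) ∧ (p < (r.ep s).2 ↔ q < (r.ep s).2) :=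
  h.lt_iff hr hs (mem_insert_self p {q}) (mem_insert_of_mem (mem_singleton_self q))

lemma notMem (h : AvoidsHull R str P) {a : GArrow n} {s : Bool} {p : ℚ}
    (ha : a.ep s = (str, p)) (hp : p ∈ P) : a ∉ R := by
  intro hr
  have h' := h a hr s (congrArg Prod.fst ha)
  rw [ha] at h'
  exact h'.elim (fun h' => lt_irrefl p (h' p hp)) (fun h' => lt_irrefl p (h' p hp))

end AvoidsHull

namespace IsAdjacentPair

variable {G : GaussDiagram n} {str : Fin n} {p q : ℚ}

lemma symm (h : IsAdjacentPair G str p q) : IsAdjacentPair G str q p :=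
  ⟨h.1.symm, fun c hc s hs => by rw [min_comm, max_comm]; exact h.2 c hc s hs⟩

lemma avoidsHull (h : IsAdjacentPair G str p q) {R : Finset (GArrow n)} (hR : R ⊆ G.arrows)
    {x y : GArrow n} (hx : x ∈ G.arrows) (hy : y ∈ G.arrows) (hxR : x ∉ R) (hyR : y ∉ R)
    {s t : Bool} (hxp : x.ep s = (str, p)) (hyq : y.ep t = (str, q)) :
    AvoidsHull R str {p, q} := by
  intro r hr u hu
  have hp : (r.ep u).2 ≠ p := fun he =>
    G.notMem_of_ep_eq hR hx hxR (s := u) (t := s) (by rw [hxp]; exact Prod.ext hu he) hr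
  have hq : (r.ep u).2 ≠ q := fun he =>
    G.notMem_of_ep_eq hR hy hyR (s := u) (t := t) (by rw [hyq]; exact Prod.ext hu he) hr
  have hout := h.2 r (hR hr) u hu
  rw [min_lt_iff, lt_max_iff] at hout
  simp only [mem_insert, mem_singleton, forall_eq_or_imp, forall_eq]
  rcases hp.lt_or_gt with h1 | h1 <;> rcases hq.lt_or_gt with h2 | h2 <;> tauto

end IsAdjacentPair

end Hulls

lemma Relation.transGen_self_of_transGen {α : Type*} {r : α → α → Prop}
    (huniq : ∀ s s' t, r s t → r s' t → s = s') {x y : α} (hxy : TransGen r x y)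
    (hy : TransGen r y y) : TransGen r x x := by
  have step : ∀ {x z}, r x z → TransGen r z z → TransGen r x x := fun hxz hz => by
    obtain ⟨c, hzc, hcz⟩ := TransGen.tail'_iff.mp hz
    rw [huniq _ _ _ hcz hxz] at hzc
    exact TransGen.head' hxz hzc
  induction hxy using TransGen.head_induction_on with
  | single h => exact step h hy
  | head h _ ih => exact step h ih

lemma lt_iff_lt_of_lt_iff_lt {α : Type*} [LinearOrder α] {a b c : α} (h : a < c ↔ b < c)
    (hac : a ≠ c) (hbc : b ≠ c) : c < a ↔ c < b := by
  rw [← not_iff_not, not_lt, not_lt, le_iff_lt_or_eq, le_iff_lt_or_eq, h, or_iff_left hac,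
    or_iff_left hbc]

lemma mem_insert_insert {α : Type*} [DecidableEq α] {x y a : α} {s : Finset α} :
    a ∈ insert x (insert y s) ↔ a = x ∨ a = y ∨ a ∈ s := by
  simp only [mem_insert]

lemma subset_insert_insert {α : Type*} [DecidableEq α] (x y : α) (s : Finset α) :
    s ⊆ insert x (insert y s) :=
  (subset_insert _ _).trans (subset_insert _ _)

section TreeDiagrams

variable {n : ℕ} {I : Finset (Fin n)} {j : Fin n} {S R : Finset (GArrow n)}

lemma parentRel_of_mem {a : GArrow n} (ha : a ∈ S) : ParentRel S a.headStr a.tailStr :=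
  ⟨a, ha, rfl, rfl⟩

lemma ParentRel.mono {S' : Finset (GArrow n)} {s t : Fin n} (h : ParentRel S s t)
    (hS : S ⊆ S') : ParentRel S' s t :=
  let ⟨a, ha, hat, hah⟩ := h
  ⟨a, hS ha, hat, hah⟩

lemma parentRel_insert (x : GArrow n) (S : Finset (GArrow n)) (s t : Fin n) :
    ParentRel (insert x S) s t ↔ (x.headStr = s ∧ x.tailStr = t) ∨ ParentRel S s t := by
  simp only [ParentRel, exists_mem_insert]
  tauto

lemma transGen_of_descends {a b : Fin n} (h : Descends S a b) (hne : a ≠ b) :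
    TransGen (ParentRel S) a b :=
  (reflTransGen_iff_eq_or_transGen.mp h).resolve_left hne.symm

lemma existsUnique_tailStr_iff (S : Finset (GArrow n)) (i : Fin n) :
    (∃! a, a ∈ S ∧ a.tailStr = i) ↔ ∑ a ∈ S, (if a.tailStr = i then 1 else 0) = 1 := by
  rw [← card_filter, card_eq_one_iff_existsUnique]
  simp only [mem_filter]

lemma existsUnique_tailStr_insert_iff {x y : GArrow n} (hxR : x ∉ R) (hyR : y ∉ R)
    (hts : y.tailStr = x.tailStr) (i : Fin n) :
    (∃! a, a ∈ insert x R ∧ a.tailStr = i) ↔ (∃! a, a ∈ insert y R ∧ a.tailStr = i) := by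
  rw [existsUnique_tailStr_iff, existsUnique_tailStr_iff, sum_insert hxR, sum_insert hyR, hts]

lemma IsTreeDiagram.eq_of_tailStr_eq (h : IsTreeDiagram I j S) {a b : GArrow n} (ha : a ∈ S)
    (hb : b ∈ S) (hab : a.tailStr = b.tailStr) : a = b := by
  obtain ⟨c, -, hc⟩ := h.2.1 a.tailStr (h.2.2.1 a ha)
  exact (hc a ⟨ha, rfl⟩).trans (hc b ⟨hb, hab.symm⟩).symm

lemma IsTreeDiagram.tailStr_ne (h : IsTreeDiagram I j S) {a b : GArrow n} (ha : a ∈ S)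
    (hb : b ∈ S) (hab : a ≠ b) : a.tailStr ≠ b.tailStr :=
  fun e => hab (h.eq_of_tailStr_eq ha hb e)

lemma IsTreeDiagram.headStr_lt_of_not_lt (h : IsTreeDiagram I j S) {a : GArrow n} (ha : a ∈ S)
    (hl : ¬a.tailStr < a.headStr) : a.headStr < a.tailStr :=
  (not_lt.mp hl).lt_of_ne (h.1 a ha).symm

lemma IsTreeDiagram.parentRel_unique (h : IsTreeDiagram I j S) {s s' t : Fin n}
    (h₁ : ParentRel S s t) (h₂ : ParentRel S s' t) : s = s' := by
  obtain ⟨a, ha, rfl, rfl⟩ := h₁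
  obtain ⟨b, hb, hbt, rfl⟩ := h₂
  rw [h.eq_of_tailStr_eq ha hb hbt.symm]

/-- Parents are unique and the trunk has no parent, so a cycle of the parent relation would pass
through `j`. -/
lemma IsPlanarTreeDiagram.descends_antisymm (h : IsPlanarTreeDiagram I j S) (hj : j ∉ I)
    {a b : Fin n} (hab : Descends S a b) (hba : Descends S b a) : a = b := by
  by_contra hne
  have hcyc : TransGen (ParentRel S) a a :=
    (transGen_of_descends hab hne).trans (transGen_of_descends hba (Ne.symm hne))
  obtain ⟨c, -, ⟨x, hx, hxa, -⟩⟩ := TransGen.tail'_iff.mp hcyc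
  have hjj := transGen_self_of_transGen (r := ParentRel S)
    (fun _ _ _ h₁ h₂ => h.1.parentRel_unique h₁ h₂) (h.2.1 a (hxa ▸ h.1.2.2.1 x hx)) hcyc
  obtain ⟨d, -, ⟨y, hy, hyj, -⟩⟩ := TransGen.tail'_iff.mp hjj
  exact hj (hyj ▸ h.1.2.2.1 y hy)

/-- Of two arrows with heads on the same string and tails on the same side of it, the one whose
head comes first has its tail nearer to that string. -/
lemma IsPlanarTreeDiagram.tailStr_lt_iff (h : IsPlanarTreeDiagram I j S) {a b : GArrow n}
    (ha : a ∈ S) (hb : b ∈ S) (hh : a.headStr = b.headStr) (hpos : a.headPos < b.headPos)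
    (hside : a.tailStr < a.headStr ↔ b.tailStr < b.headStr) :
    a.tailStr < b.tailStr ↔ a.headStr < a.tailStr := by
  have hpair := h.2.2.2 a ha b hb hh hpos _ _ .refl .refl
  by_cases hl : a.tailStr < a.headStr
  · exact iff_of_false (hpair.1 hl (hside.mp hl)).asymm hl.asymm
  · exact iff_of_true (hpair.2 (h.1.headStr_lt_of_not_lt ha hl)
      (h.1.headStr_lt_of_not_lt hb (mt hside.mpr hl))) (h.1.headStr_lt_of_not_lt ha hl)

lemma IsPlanarTreeDiagram.lt_of_descends_of_tailStr_lt (h : IsPlanarTreeDiagram I j S)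
    {a b : GArrow n} (ha : a ∈ S) (hb : b ∈ S) (hh : a.headStr = b.headStr)
    (hpos : a.headPos ≠ b.headPos) (hside : a.tailStr < a.headStr ↔ b.tailStr < b.headStr)
    (hab : a.tailStr < b.tailStr) {k k' : Fin n} (hk : Descends S a.tailStr k)
    (hk' : Descends S b.tailStr k') : k < k' := by
  rcases hpos.lt_or_gt with hpos | hpos
  · have hr := (h.tailStr_lt_iff ha hb hh hpos hside).mp hab
    exact (h.2.2.2 a ha b hb hh hpos k k' hk hk').2 hr
      (h.1.headStr_lt_of_not_lt hb (mt hside.mpr hr.asymm))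
  · have hl : b.tailStr < b.headStr := (not_lt.mp (mt
      (h.tailStr_lt_iff hb ha hh.symm hpos hside.symm).mpr hab.asymm)).lt_of_ne (h.1.1 b hb)
    exact (h.2.2.2 b hb a ha hh.symm hpos k' k hk' hk).1 hl (hside.mpr hl)

noncomputable def treeTerm (I : Finset (Fin n)) (j : Fin n) (S : Finset (GArrow n)) : ℤ :=
  if IsPlanarTreeDiagram I j S then treeSign S * ∏ a ∈ S, a.sign else 0

lemma Z_eq_sum_treeTerm (G : GaussDiagram n) :
    Z I j G = ∑ S ∈ G.arrows.powerset, treeTerm I j S := rfl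

lemma treeTerm_eq_zero_of_not_isPlanarTreeDiagram (h : ¬IsPlanarTreeDiagram I j S) :
    treeTerm I j S = 0 :=
  if_neg h

lemma treeTerm_eq_zero_of_tailStr_eq {a b : GArrow n} (ha : a ∈ S) (hb : b ∈ S) (hab : a ≠ b)
    (h : a.tailStr = b.tailStr) : treeTerm I j S = 0 :=
  treeTerm_eq_zero_of_not_isPlanarTreeDiagram fun hT => hab (hT.1.eq_of_tailStr_eq ha hb h)

lemma treeTerm_eq_zero_of_tailStr_eq_headStr {a : GArrow n} (ha : a ∈ S)
    (h : a.tailStr = a.headStr) : treeTerm I j S = 0 :=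
  treeTerm_eq_zero_of_not_isPlanarTreeDiagram fun hT => hT.1.1 a ha h

lemma treeSign_insert {x : GArrow n} (hx : x ∉ S) :
    treeSign (insert x S) = (if x.tailStr < x.headStr then -1 else 1) * treeSign S := by
  unfold treeSign
  rw [filter_insert]
  split_ifs
  · rw [card_insert_of_notMem (fun h => hx (mem_of_mem_filter x h)), pow_succ, mul_comm]
  · rw [one_mul]

lemma treeTerm_insert_insert {x y : GArrow n} (hxy : x ≠ y) (hxR : x ∉ R) (hyR : y ∉ R) :
    treeTerm I j (insert x (insert y R)) =
      if IsPlanarTreeDiagram I j (insert x (insert y R)) then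
        (if x.tailStr < x.headStr then -1 else 1) * x.sign *
          ((if y.tailStr < y.headStr then -1 else 1) * y.sign) * (treeSign R * ∏ r ∈ R, r.sign)
      else 0 := by
  have hx : x ∉ insert y R := fun h => (mem_insert.mp h).elim hxy hxR
  unfold treeTerm
  rw [treeSign_insert hx, treeSign_insert hyR, prod_insert hx, prod_insert hyR]
  congr 1
  ring

end TreeDiagrams

section MovingOneArrow

variable {n : ℕ} {I : Finset (Fin n)} {j : Fin n} {R : Finset (GArrow n)} {x y : GArrow n}

lemma IsTreeDiagram.insert_replace (hxR : x ∉ R) (hyR : y ∉ R)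
    (hts : y.tailStr = x.tailStr) (hhs : y.headStr = x.headStr)
    (hWt : AvoidsHull R x.tailStr {x.tailPos, y.tailPos})
    (hWh : AvoidsHull R x.headStr {x.headPos, y.headPos})
    (h : IsTreeDiagram I j (insert x R)) : IsTreeDiagram I j (insert y R) := by
  obtain ⟨h₁, h₂, h₃, h₄, h₅⟩ := h
  have hx : x ∈ insert x R := mem_insert_self x R
  refine ⟨?_, fun i hi => (existsUnique_tailStr_insert_iff hxR hyR hts i).mp (h₂ i hi), ?_, ?_,
    fun a ha b hb hab => ?_⟩
  · simp only [forall_mem_insert] at h₁ ⊢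
    exact ⟨hts ▸ hhs ▸ h₁.1, h₁.2⟩
  · simp only [forall_mem_insert] at h₃ ⊢
    exact ⟨hts ▸ h₃.1, h₃.2⟩
  · simp only [forall_mem_insert] at h₄ ⊢
    exact ⟨hhs ▸ h₄.1, h₄.2⟩
  rcases mem_insert.mp ha with rfl | haR <;> rcases mem_insert.mp hb with rfl | hbR
  · exact absurd (hts.symm.trans (hab.symm.trans hhs)) (h₁ x hx)
  · rw [hhs] at hab
    exact ((hWh.lt_iff_pair hbR (s := false) hab.symm).2).mp
      (h₅ x hx b (mem_insert_of_mem hbR) hab)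
  · rw [hts] at hab
    exact ((hWt.lt_iff_pair haR (s := true) hab).1).mp (h₅ a (mem_insert_of_mem haR) x hx hab)
  · exact h₅ a (mem_insert_of_mem haR) b (mem_insert_of_mem hbR) hab

lemma IsPlanarTreeDiagram.insert_replace (hxR : x ∉ R) (hyR : y ∉ R)
    (hts : y.tailStr = x.tailStr) (hhs : y.headStr = x.headStr)
    (hWt : AvoidsHull R x.tailStr {x.tailPos, y.tailPos})
    (hWh : AvoidsHull R x.headStr {x.headPos, y.headPos})
    (h : IsPlanarTreeDiagram I j (insert x R)) : IsPlanarTreeDiagram I j (insert y R) := by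
  have hP : ParentRel (insert y R) = ParentRel (insert x R) := by
    funext s t
    simp only [parentRel_insert, hts, hhs]
  have hD : Descends (insert y R) = Descends (insert x R) := by rw [Descends, Descends, hP]
  have hx : x ∈ insert x R := mem_insert_self x R
  obtain ⟨hT, hreach, hside, hpair⟩ := h
  refine ⟨hT.insert_replace hxR hyR hts hhs hWt hWh, by rw [hP]; exact hreach,
    fun a ha k hk => ?_, fun a ha b hb hH hlt k k' hk hk' => ?_⟩
  · rw [hD] at hk
    rcases mem_insert.mp ha with rfl | haR
    · rw [hts] at hk ⊢
      rw [hhs]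
      exact hside x hx k hk
    · exact hside a (mem_insert_of_mem haR) k hk
  rw [hD] at hk hk'
  rcases mem_insert.mp ha with rfl | haR <;> rcases mem_insert.mp hb with rfl | hbR
  · exact absurd hlt (lt_irrefl _)
  · rw [hhs] at hH
    rw [hts] at hk ⊢
    rw [hhs]
    exact hpair x hx b (mem_insert_of_mem hbR) hH
      (((hWh.lt_iff_pair hbR (s := true) hH.symm).2).mpr hlt) k k' hk hk'
  · rw [hhs] at hH
    rw [hts] at hk' ⊢
    rw [hhs]
    exact hpair a (mem_insert_of_mem haR) x hx hH
      (((hWh.lt_iff_pair haR (s := true) hH).1).mpr hlt) k k' hk hk'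
  · exact hpair a (mem_insert_of_mem haR) b (mem_insert_of_mem hbR) hH hlt k k' hk hk'

lemma treeTerm_insert_replace (hxR : x ∉ R) (hyR : y ∉ R)
    (hts : y.tailStr = x.tailStr) (hhs : y.headStr = x.headStr)
    (hWt : AvoidsHull R x.tailStr {x.tailPos, y.tailPos})
    (hWh : AvoidsHull R x.headStr {x.headPos, y.headPos}) :
    x.sign * treeTerm I j (insert y R) = y.sign * treeTerm I j (insert x R) := by
  have hiff : IsPlanarTreeDiagram I j (insert y R) ↔ IsPlanarTreeDiagram I j (insert x R) :=
    ⟨.insert_replace hyR hxR hts.symm hhs.symm (hts ▸ pair_comm x.tailPos y.tailPos ▸ hWt)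
      (hhs ▸ pair_comm x.headPos y.headPos ▸ hWh), .insert_replace hxR hyR hts hhs hWt hWh⟩
  unfold treeTerm
  rw [hiff]
  split_ifs
  · rw [treeSign_insert hxR, treeSign_insert hyR, prod_insert hxR, prod_insert hyR, hts, hhs]
    ring
  · simp

lemma treeTerm_insert_replace_of_sign_eq (hxR : x ∉ R) (hyR : y ∉ R)
    (hts : y.tailStr = x.tailStr) (hhs : y.headStr = x.headStr) (hsg : y.sign = x.sign)
    (hx : x.sign ≠ 0) (hWt : AvoidsHull R x.tailStr {x.tailPos, y.tailPos})
    (hWh : AvoidsHull R x.headStr {x.headPos, y.headPos}) :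
    treeTerm I j (insert x R) = treeTerm I j (insert y R) :=
  (mul_left_cancel₀ hx (by rw [treeTerm_insert_replace hxR hyR hts hhs hWt hWh, hsg])).symm

end MovingOneArrow

section FirstAndSecondMoves

variable {n : ℕ} {I : Finset (Fin n)} {j : Fin n} {G G' : GaussDiagram n}

theorem Z_eq_of_omega1Del (h : Omega1Del G G') : Z I j G = Z I j G' := by
  obtain ⟨a, ha, hloop, -, hG'⟩ := h
  rw [Z_eq_sum_treeTerm, Z_eq_sum_treeTerm, hG', ← insert_erase ha,
    sum_powerset_insert (notMem_erase a _), erase_insert (notMem_erase a _),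
    sum_eq_zero fun S _ => treeTerm_eq_zero_of_tailStr_eq_headStr (mem_insert_self a S) hloop,
    add_zero]

theorem Z_eq_of_omega2Del (h : Omega2Del G G') : Z I j G = Z I j G' := by
  obtain ⟨a, ha, b, hb, hab, hts, hhs, hsg, hadjT, hadjH, -, hG'⟩ := h
  set R₀ := (G.arrows.erase a).erase b
  have hbR₀ : b ∉ R₀ := notMem_erase b _
  have haR₀ : a ∉ insert b R₀ := by simp [R₀, hab]
  have hG : insert a (insert b R₀) = G.arrows := by
    rw [insert_erase (mem_erase.mpr ⟨Ne.symm hab, hb⟩), insert_erase ha]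
  have hR₀G : R₀ ⊆ G.arrows := (erase_subset _ _).trans (erase_subset _ _)
  have cancel : ∀ R ∈ R₀.powerset, treeTerm I j (insert b R) +
      (treeTerm I j (insert a R) + treeTerm I j (insert a (insert b R))) = 0 := by
    intro R hR
    have hRG : R ⊆ G.arrows := (mem_powerset.mp hR).trans hR₀G
    have haR : a ∉ R := fun h => haR₀ (mem_insert_of_mem (mem_powerset.mp hR h))
    have hbR : b ∉ R := fun h => hbR₀ (mem_powerset.mp hR h)
    have hswap := treeTerm_insert_replace (I := I) (j := j) haR hbR hts.symm hhs.symm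
      (hadjT.avoidsHull hRG ha hb haR hbR (s := false) (t := false) rfl (by rw [hts]; rfl))
      (hadjH.avoidsHull hRG ha hb haR hbR (s := true) (t := true) rfl (by rw [hhs]; rfl))
    rw [treeTerm_eq_zero_of_tailStr_eq (mem_insert_self a _)
      (mem_insert_of_mem (mem_insert_self b R)) hab hts]
    rw [hsg] at hswap
    rcases G.sign_pm b hb with h | h <;> rw [h] at hswap <;> linarith
  rw [Z_eq_sum_treeTerm, Z_eq_sum_treeTerm, hG', ← hG, sum_powerset_insert haR₀,
    sum_powerset_insert hbR₀, sum_powerset_insert hbR₀, add_assoc, ← sum_add_distrib,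
    ← sum_add_distrib, sum_eq_zero cancel, add_zero]

end FirstAndSecondMoves

/-- The tree conditions other than "heads precede tails" only see the strings of the arrows. -/
lemma IsTreeDiagram.insert_insert_replace {n : ℕ} {I : Finset (Fin n)} {j : Fin n}
    {R : Finset (GArrow n)} {x y x' y' : GArrow n}
    (h : IsTreeDiagram I j (insert x (insert y R))) (hxR : x ∉ R) (hyR : y ∉ R)
    (hx'R : x' ∉ R) (hy'R : y' ∉ R) (hxy : x.tailStr ≠ y.tailStr)
    (htx : x'.tailStr = x.tailStr) (hty : y'.tailStr = y.tailStr)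
    (hx' : x'.tailStr ≠ x'.headStr) (hy' : y'.tailStr ≠ y'.headStr)
    (hhx : x'.headStr ∈ I ∨ x'.headStr = j) (hhy : y'.headStr ∈ I ∨ y'.headStr = j)
    (hord : ∀ a ∈ insert x' (insert y' R), ∀ b ∈ insert x' (insert y' R),
      a.headStr = b.tailStr → a.headPos < b.tailPos) :
    IsTreeDiagram I j (insert x' (insert y' R)) := by
  obtain ⟨h₁, h₂, h₃, h₄, -⟩ := h
  simp only [forall_mem_insert] at h₁ h₃ h₄
  have hxyR : x ∉ insert y R := fun h =>
    (mem_insert.mp h).elim (fun e => hxy (congrArg GArrow.tailStr e)) hxR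
  have hxyR' : x' ∉ insert y' R := fun h =>
    (mem_insert.mp h).elim (fun e => hxy (htx ▸ hty ▸ congrArg GArrow.tailStr e)) hx'R
  refine ⟨?_, fun i hi => ?_, ?_, ?_, hord⟩
  · simp only [forall_mem_insert]
    exact ⟨hx', hy', h₁.2.2⟩
  · have := h₂ i hi
    rw [existsUnique_tailStr_iff, sum_insert hxyR, sum_insert hyR] at this
    rwa [existsUnique_tailStr_iff, sum_insert hxyR', sum_insert hy'R, htx, hty]
  · simp only [forall_mem_insert]
    exact ⟨htx ▸ h₃.1, hty ▸ h₃.2.1, h₃.2.2⟩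
  · simp only [forall_mem_insert]
    exact ⟨hhx, hhy, h₄.2.2⟩

section SiblingsAndChains

/-! The *sibling* configuration `insert ⟨E, eS, T, tS, sA⟩ (insert ⟨M, mS, T, tS', sB⟩ R)` hangs
the strings `E` and `M` side by side on `T`; the *chain* configuration
`insert ⟨E, eC, M, mC, sC⟩ (insert ⟨M, mD, T, tD, sB⟩ R)` hangs `E` on `M` and `M` on `T`. -/

variable {n : ℕ} {I : Finset (Fin n)} {j : Fin n} {E M T : Fin n} {R : Finset (GArrow n)}
  {eS tS mS tS' eC mC mD tD : ℚ} {sA sB sC : ℤ}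

lemma descends_chain_of_descends_sibling {a b : Fin n}
    (h : Descends (insert ⟨E, eS, T, tS, sA⟩ (insert ⟨M, mS, T, tS', sB⟩ R)) a b) :
    Descends (insert ⟨E, eC, M, mC, sC⟩ (insert ⟨M, mD, T, tD, sB⟩ R)) a b := by
  have hTM := parentRel_of_mem (S := insert ⟨E, eC, M, mC, sC⟩ (insert ⟨M, mD, T, tD, sB⟩ R))
    (mem_insert_of_mem (mem_insert_self _ _))
  have hME := parentRel_of_mem (mem_insert_self (⟨E, eC, M, mC, sC⟩ : GArrow n)
    (insert ⟨M, mD, T, tD, sB⟩ R))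
  refine reflTransGen_closed (fun s t hst => ?_) a b h
  rw [parentRel_insert, parentRel_insert] at hst
  rcases hst with ⟨rfl, rfl⟩ | ⟨rfl, rfl⟩ | hst
  · exact .tail (.single hTM) hME
  · exact .single hTM
  · exact .single (hst.mono (subset_insert_insert _ _ R))

lemma descends_sibling_of_descends_chain (hEM : E ≠ M) (hRM : ∀ r ∈ R, r.tailStr ≠ M)
    {a b : Fin n} (h : Descends (insert ⟨E, eC, M, mC, sC⟩ (insert ⟨M, mD, T, tD, sB⟩ R)) a b) :
    Descends (insert ⟨E, eS, T, tS, sA⟩ (insert ⟨M, mS, T, tS', sB⟩ R)) a b ∨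
      a = M ∧ Descends (insert ⟨E, eS, T, tS, sA⟩ (insert ⟨M, mS, T, tS', sB⟩ R)) E b := by
  set Ss := insert (⟨E, eS, T, tS, sA⟩ : GArrow n) (insert ⟨M, mS, T, tS', sB⟩ R)
  have hTE : ParentRel Ss T E := parentRel_of_mem (mem_insert_self _ _)
  have hTM : ParentRel Ss T M := parentRel_of_mem (mem_insert_of_mem (mem_insert_self _ _))
  have hpath : Descends Ss a b ∨ Descends Ss a M ∧ Descends Ss E b := by
    induction h with
    | refl => exact .inl .refl
    | tail _ hst ih =>
      rw [parentRel_insert, parentRel_insert] at hst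
      rcases hst with ⟨rfl, rfl⟩ | ⟨rfl, rfl⟩ | hst
      · exact .inr ⟨ih.elim id And.left, .refl⟩
      · exact ih.imp (·.tail hTM) (fun h => ⟨h.1, h.2.tail hTM⟩)
      · have hst' := hst.mono (subset_insert_insert ⟨E, eS, T, tS, sA⟩ ⟨M, mS, T, tS', sB⟩ R)
        exact ih.imp (·.tail hst') (fun h => ⟨h.1, h.2.tail hst'⟩)
  rcases hpath with h | ⟨haM, hEb⟩
  · exact .inl h
  rcases haM.cases_tail with rfl | ⟨c, hac, hcM⟩
  · exact .inr ⟨rfl, hEb⟩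
  rw [parentRel_insert, parentRel_insert] at hcM
  rcases hcM with ⟨-, h⟩ | ⟨rfl, -⟩ | ⟨r, hr, hrM, -⟩
  · exact absurd h hEM
  · exact .inl ((hac.tail hTE).trans hEb)
  · exact absurd hrM (hRM r hr)

lemma IsPlanarTreeDiagram.chain_headPos_lt
    (h : IsPlanarTreeDiagram I j (insert ⟨E, eC, M, mC, sC⟩ (insert ⟨M, mD, T, tD, sB⟩ R))) :
    mC < mD :=
  h.1.2.2.2.2 _ (mem_insert_self _ _) _ (mem_insert_of_mem (mem_insert_self _ _)) rfl

lemma IsPlanarTreeDiagram.chain_side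
    (h : IsPlanarTreeDiagram I j (insert ⟨E, eC, M, mC, sC⟩ (insert ⟨M, mD, T, tD, sB⟩ R))) :
    M < T ↔ E < T :=
  h.2.2.1 _ (mem_insert_of_mem (mem_insert_self _ _)) E
    (.single (parentRel_of_mem (mem_insert_self _ _)))

lemma IsPlanarTreeDiagram.sibling_order (hEM : E ≠ M) (hMT : M ≠ T) (hET : E ≠ T)
    (hside : E < T ↔ M < T) (htS : tS ≠ tS')
    (h : IsPlanarTreeDiagram I j (insert ⟨E, eS, T, tS, sA⟩ (insert ⟨M, mS, T, tS', sB⟩ R))) :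
    tS < tS' ↔ (E < M ↔ T < E) := by
  have hα := mem_insert_self (⟨E, eS, T, tS, sA⟩ : GArrow n) (insert ⟨M, mS, T, tS', sB⟩ R)
  have hβ : (⟨M, mS, T, tS', sB⟩ : GArrow n) ∈
      insert ⟨E, eS, T, tS, sA⟩ (insert ⟨M, mS, T, tS', sB⟩ R) :=
    mem_insert_of_mem (mem_insert_self _ _)
  rcases htS.lt_or_gt with hlt | hlt
  · exact iff_of_true hlt (h.tailStr_lt_iff hα hβ rfl hlt hside)
  · have hME : M < E ↔ T < M := h.tailStr_lt_iff hβ hα rfl hlt hside.symm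
    rw [← lt_iff_lt_of_lt_iff_lt hside hET hMT] at hME
    refine iff_of_false hlt.asymm fun hP => ?_
    rcases hEM.lt_or_gt with h' | h'
    · exact h'.asymm (hME.mpr (hP.mp h'))
    · exact h'.asymm (hP.mpr (hME.mp h'))

lemma IsPlanarTreeDiagram.sibling_subtrees_ordered (hside : E < T ↔ M < T) (htS : tS ≠ tS')
    (h : IsPlanarTreeDiagram I j (insert ⟨E, eS, T, tS, sA⟩ (insert ⟨M, mS, T, tS', sB⟩ R)))
    {k k' : Fin n} (hk : Descends (insert ⟨E, eS, T, tS, sA⟩ (insert ⟨M, mS, T, tS', sB⟩ R)) E k)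
    (hk' : Descends (insert ⟨E, eS, T, tS, sA⟩ (insert ⟨M, mS, T, tS', sB⟩ R)) M k') :
    (E < M → k < k') ∧ (M < E → k' < k) := by
  have hα := mem_insert_self (⟨E, eS, T, tS, sA⟩ : GArrow n) (insert ⟨M, mS, T, tS', sB⟩ R)
  have hβ : (⟨M, mS, T, tS', sB⟩ : GArrow n) ∈
      insert ⟨E, eS, T, tS, sA⟩ (insert ⟨M, mS, T, tS', sB⟩ R) :=
    mem_insert_of_mem (mem_insert_self _ _)
  exact ⟨fun hlt => h.lt_of_descends_of_tailStr_lt hα hβ rfl htS hside hlt hk hk',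
    fun hlt => h.lt_of_descends_of_tailStr_lt hβ hα rfl htS.symm hside.symm hlt hk' hk⟩

/-- In a planar chain, the subtree of `E` hangs from the last head on `M`, so it lies on one side
of everything else hanging from `M`. -/
lemma IsPlanarTreeDiagram.chain_subtrees_ordered (hj : j ∉ I) (hEM : E ≠ M) (hMT : M ≠ T)
    (hWM : AvoidsHull R M {mC, mD})
    (h : IsPlanarTreeDiagram I j (insert ⟨E, eC, M, mC, sC⟩ (insert ⟨M, mD, T, tD, sB⟩ R)))
    {k k' : Fin n} (hk : Descends (insert ⟨E, eS, T, tS, sA⟩ (insert ⟨M, mS, T, tS', sB⟩ R)) E k)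
    (hk' : Descends (insert ⟨E, eS, T, tS, sA⟩ (insert ⟨M, mS, T, tS', sB⟩ R)) M k') :
    (E < M → k < k') ∧ (M < E → k' < k) := by
  set Sc := insert (⟨E, eC, M, mC, sC⟩ : GArrow n) (insert ⟨M, mD, T, tD, sB⟩ R)
  have hγ : (⟨E, eC, M, mC, sC⟩ : GArrow n) ∈ Sc := mem_insert_self _ _
  have hδ : (⟨M, mD, T, tD, sB⟩ : GArrow n) ∈ Sc := mem_insert_of_mem (mem_insert_self _ _)
  have hkC : Descends Sc E k := descends_chain_of_descends_sibling hk
  have hkM : E < M ↔ k < M := h.2.2.1 _ hγ k hkC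
  have hkne : k ≠ M := by
    rintro rfl
    exact hEM (h.descends_antisymm hj hkC (.single (parentRel_of_mem hγ)))
  have hMk : M < E → M < k := fun hME => (not_lt.mp (mt hkM.mpr hME.asymm)).lt_of_ne hkne.symm
  rcases hk'.cases_head with rfl | ⟨c, hMc, hck'⟩
  · exact ⟨hkM.mp, hMk⟩
  rw [parentRel_insert, parentRel_insert] at hMc
  rcases hMc with ⟨hTM, -⟩ | ⟨hTM, -⟩ | ⟨r, hr, rfl, hrM⟩
  · exact absurd hTM.symm hMT
  · exact absurd hTM.symm hMT
  have hrS : r ∈ Sc := subset_insert_insert _ _ _ hr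
  have hk'C : Descends Sc r.tailStr k' := descends_chain_of_descends_sibling hck'
  have hrlt : r.headPos < mC := ((hWM.lt_iff_pair hr (s := true) hrM).1).mpr
    (h.1.2.2.2.2 r hrS _ hδ hrM)
  have hpair := h.2.2.2 r hrS _ hγ hrM hrlt k' k hk'C hkC
  have hside := h.2.2.1 r hrS k' hk'C
  have hrne : r.tailStr ≠ M := fun e => h.1.1 r hrS (e.trans hrM.symm)
  rw [hrM] at hpair hside
  have hk'ne : k' ≠ M := by
    rintro rfl
    exact hrne (h.descends_antisymm hj hk'C (.single ⟨r, hrS, rfl, hrM⟩))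
  refine ⟨fun hEM' => ?_, fun hME => ?_⟩ <;> by_cases hrl : r.tailStr < M
  · exact hpair.1 hrl hEM'
  · exact (hkM.mp hEM').trans ((not_lt.mp (mt hside.mpr hrl)).lt_of_ne hk'ne.symm)
  · exact (hside.mp hrl).trans (hMk hME)
  · exact hpair.2 ((not_lt.mp hrl).lt_of_ne hrne.symm) hME

end SiblingsAndChains

section Transfer

variable {n : ℕ} {I : Finset (Fin n)} {j : Fin n} {E M T : Fin n} {R : Finset (GArrow n)}
  {eS tS mS tS' eC mC mD tD : ℚ} {sA sB sC : ℤ}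

lemma IsTreeDiagram.chain_of_sibling (hEM : E ≠ M) (hMT : M ≠ T) (hET : E ≠ T)
    (hWE : AvoidsHull R E {eS, eC}) (hWM : AvoidsHull R M {mS, mC, mD})
    (hWT : AvoidsHull R T {tS, tS', tD}) (hmCD : mC < mD)
    (h : IsTreeDiagram I j (insert ⟨E, eS, T, tS, sA⟩ (insert ⟨M, mS, T, tS', sB⟩ R))) :
    IsTreeDiagram I j (insert ⟨E, eC, M, mC, sC⟩ (insert ⟨M, mD, T, tD, sB⟩ R)) := by
  have heS : eS ∈ ({eS, eC} : Finset ℚ) := by simp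
  have heC : eC ∈ ({eS, eC} : Finset ℚ) := by simp
  have hmS : mS ∈ ({mS, mC, mD} : Finset ℚ) := by simp
  have hmC : mC ∈ ({mS, mC, mD} : Finset ℚ) := by simp
  have hmD : mD ∈ ({mS, mC, mD} : Finset ℚ) := by simp
  have htS₁ : tS ∈ ({tS, tS', tD} : Finset ℚ) := by simp
  have htS₂ : tS' ∈ ({tS, tS', tD} : Finset ℚ) := by simp
  have htD : tD ∈ ({tS, tS', tD} : Finset ℚ) := by simp
  set α : GArrow n := ⟨E, eS, T, tS, sA⟩
  set β : GArrow n := ⟨M, mS, T, tS', sB⟩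
  set γ : GArrow n := ⟨E, eC, M, mC, sC⟩
  set δ : GArrow n := ⟨M, mD, T, tD, sB⟩
  have hα : α ∈ insert α (insert β R) := mem_insert_self _ _
  have hβ : β ∈ insert α (insert β R) := mem_insert_of_mem (mem_insert_self _ _)
  have hRS : ∀ {r}, r ∈ R → r ∈ insert α (insert β R) := fun hr => subset_insert_insert _ _ _ hr
  have hβR : β ∉ R := hWT.notMem (s := true) rfl htS₂
  have hRM : ∀ r ∈ R, r.tailStr ≠ M :=
    fun r hr => h.tailStr_ne (hRS hr) hβ (ne_of_mem_of_not_mem hr hβR)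
  have h₅ := h.2.2.2.2
  refine h.insert_insert_replace (hWT.notMem (s := true) rfl htS₁) hβR
    (hWM.notMem (s := true) rfl hmC) (hWT.notMem (s := true) rfl htD) hEM rfl rfl hEM hMT
    (.inl (h.2.2.1 β hβ)) (h.2.2.2.1 α hα) fun a ha b hb hab => ?_
  rcases mem_insert_insert.mp ha with rfl | rfl | haR <;>
    rcases mem_insert_insert.mp hb with rfl | rfl | hbR
  · exact absurd hab hEM.symm
  · exact hmCD
  · exact absurd hab.symm (hRM b hbR)
  · exact absurd hab hET.symm
  · exact absurd hab hMT.symm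
  · exact ((hWT.lt_iff hbR (s := false) hab.symm htS₁ htD).2).mp (h₅ α hα b (hRS hbR) hab)
  · exact ((hWE.lt_iff haR (s := true) hab heS heC).1).mp (h₅ a (hRS haR) α hα hab)
  · exact ((hWM.lt_iff haR (s := true) hab hmS hmD).1).mp (h₅ a (hRS haR) β hβ hab)
  · exact h₅ a (hRS haR) b (hRS hbR) hab

theorem IsPlanarTreeDiagram.chain_of_sibling (hj : j ∉ I) (hEM : E ≠ M) (hMT : M ≠ T)
    (hET : E ≠ T) (hWE : AvoidsHull R E {eS, eC}) (hWM : AvoidsHull R M {mS, mC, mD})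
    (hWT : AvoidsHull R T {tS, tS', tD}) (htS : tS ≠ tS') (hmCD : mC < mD)
    (hside : E < T ↔ M < T)
    (h : IsPlanarTreeDiagram I j (insert ⟨E, eS, T, tS, sA⟩ (insert ⟨M, mS, T, tS', sB⟩ R))) :
    IsPlanarTreeDiagram I j (insert ⟨E, eC, M, mC, sC⟩ (insert ⟨M, mD, T, tD, sB⟩ R)) := by
  have hmS : mS ∈ ({mS, mC, mD} : Finset ℚ) := by simp
  have hmC : mC ∈ ({mS, mC, mD} : Finset ℚ) := by simp
  have htS₁ : tS ∈ ({tS, tS', tD} : Finset ℚ) := by simp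
  have htS₂ : tS' ∈ ({tS, tS', tD} : Finset ℚ) := by simp
  have htD : tD ∈ ({tS, tS', tD} : Finset ℚ) := by simp
  have hord := fun {k k'} => h.sibling_subtrees_ordered (k := k) (k' := k') hside htS
  set α : GArrow n := ⟨E, eS, T, tS, sA⟩
  set β : GArrow n := ⟨M, mS, T, tS', sB⟩
  set γ : GArrow n := ⟨E, eC, M, mC, sC⟩
  set δ : GArrow n := ⟨M, mD, T, tD, sB⟩
  obtain ⟨hT, -, hsideS, hpairS⟩ := id h
  have hα : α ∈ insert α (insert β R) := mem_insert_self _ _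
  have hβ : β ∈ insert α (insert β R) := mem_insert_of_mem (mem_insert_self _ _)
  have hRS : ∀ {r}, r ∈ R → r ∈ insert α (insert β R) := fun hr => subset_insert_insert _ _ _ hr
  have hRM : ∀ r ∈ R, r.tailStr ≠ M := fun r hr =>
    hT.tailStr_ne (hRS hr) hβ (ne_of_mem_of_not_mem hr (hWT.notMem (s := true) rfl htS₂))
  have hdesc : ∀ {a k}, Descends (insert γ (insert δ R)) a k →
      Descends (insert α (insert β R)) a k ∨ a = M ∧ Descends (insert α (insert β R)) E k :=
    descends_sibling_of_descends_chain hEM hRM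
  have hdescR : ∀ {r k}, r ∈ R → Descends (insert γ (insert δ R)) r.tailStr k →
      Descends (insert α (insert β R)) r.tailStr k :=
    fun hr hk => (hdesc hk).resolve_right fun h => hRM _ hr h.1
  have hside' : T < E ↔ T < M := lt_iff_lt_of_lt_iff_lt hside hET hMT
  refine ⟨hT.chain_of_sibling hEM hMT hET hWE hWM hWT hmCD, fun i hi => ?_,
    fun a ha k hk => ?_, fun a ha b hb hH hlt k k' hk hk' => ?_⟩
  · exact transGen_of_descends (descends_chain_of_descends_sibling (h.2.1 i hi).to_reflTransGen)
      fun e => hj (e ▸ hi)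
  · rcases mem_insert_insert.mp ha with rfl | rfl | haR
    · have hkM := hord ((hdesc hk).resolve_right fun h => hEM h.1) .refl
      exact ⟨hkM.1, fun hlt => hEM.lt_or_gt.resolve_right fun hME => (hkM.2 hME).asymm hlt⟩
    · rcases hdesc hk with hk | ⟨-, hk⟩
      · exact hsideS β hβ k hk
      · exact hside.symm.trans (hsideS α hα k hk)
    · exact hsideS a (hRS haR) k (hdescR haR hk)
  rcases mem_insert_insert.mp ha with rfl | rfl | haR <;>
    rcases mem_insert_insert.mp hb with rfl | rfl | hbR
  · exact absurd hlt (lt_irrefl _)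
  · exact absurd hH hMT
  · exact absurd hlt (((hWM.lt_iff hbR (s := true) hH.symm hmS hmC).1).mp
      (hT.2.2.2.2 b (hRS hbR) β hβ hH.symm)).asymm
  · exact absurd hH hMT.symm
  · exact absurd hlt (lt_irrefl _)
  · have hk' := hdescR hbR hk'
    rcases hdesc hk with hk | ⟨-, hk⟩
    · exact hpairS β hβ b (hRS hbR) hH
        (((hWT.lt_iff hbR (s := true) hH.symm htD htS₂).2).mp hlt) k k' hk hk'
    · have hpair := hpairS α hα b (hRS hbR) hH
        (((hWT.lt_iff hbR (s := true) hH.symm htD htS₁).2).mp hlt) k k' hk hk'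
      exact ⟨fun h₁ => hpair.1 (hside.mpr h₁), fun h₁ => hpair.2 (hside'.mpr h₁)⟩
  · have hk := hdescR haR hk
    have hk' := (hdesc hk').resolve_right fun h => hEM h.1
    have hMk : Descends (insert α (insert β R)) M k := .head ⟨a, hRS haR, rfl, hH⟩ hk
    exact ⟨fun _ h₂ => (hord hk' hMk).1 h₂, fun _ h₂ => (hord hk' hMk).2 h₂⟩
  · have hk := hdescR haR hk
    rcases hdesc hk' with hk' | ⟨-, hk'⟩
    · exact hpairS a (hRS haR) β hβ hH
        (((hWT.lt_iff haR (s := true) hH htD htS₂).1).mp hlt) k k' hk hk'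
    · have hpair := hpairS a (hRS haR) α hα hH
        (((hWT.lt_iff haR (s := true) hH htD htS₁).1).mp hlt) k k' hk hk'
      exact ⟨fun h₁ h₂ => hpair.1 h₁ (hside.mpr h₂), fun h₁ h₂ => hpair.2 h₁ (hside'.mpr h₂)⟩
  · exact hpairS a (hRS haR) b (hRS hbR) hH hlt k k' (hdescR haR hk) (hdescR hbR hk')

lemma IsTreeDiagram.sibling_of_chain (hEM : E ≠ M) (hMT : M ≠ T) (hET : E ≠ T)
    (hWE : AvoidsHull R E {eS, eC}) (hWM : AvoidsHull R M {mS, mC, mD})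
    (hWT : AvoidsHull R T {tS, tS', tD})
    (h : IsTreeDiagram I j (insert ⟨E, eC, M, mC, sC⟩ (insert ⟨M, mD, T, tD, sB⟩ R))) :
    IsTreeDiagram I j (insert ⟨E, eS, T, tS, sA⟩ (insert ⟨M, mS, T, tS', sB⟩ R)) := by
  have heS : eS ∈ ({eS, eC} : Finset ℚ) := by simp
  have heC : eC ∈ ({eS, eC} : Finset ℚ) := by simp
  have hmS : mS ∈ ({mS, mC, mD} : Finset ℚ) := by simp
  have hmC : mC ∈ ({mS, mC, mD} : Finset ℚ) := by simp
  have hmD : mD ∈ ({mS, mC, mD} : Finset ℚ) := by simp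
  have htS₁ : tS ∈ ({tS, tS', tD} : Finset ℚ) := by simp
  have htS₂ : tS' ∈ ({tS, tS', tD} : Finset ℚ) := by simp
  have htD : tD ∈ ({tS, tS', tD} : Finset ℚ) := by simp
  set γ : GArrow n := ⟨E, eC, M, mC, sC⟩
  set δ : GArrow n := ⟨M, mD, T, tD, sB⟩
  have hγ : γ ∈ insert γ (insert δ R) := mem_insert_self _ _
  have hδ : δ ∈ insert γ (insert δ R) := mem_insert_of_mem (mem_insert_self _ _)
  have hRC : ∀ {r}, r ∈ R → r ∈ insert γ (insert δ R) := fun hr => subset_insert_insert _ _ _ hr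
  have h₅ := h.2.2.2.2
  refine h.insert_insert_replace (hWM.notMem (s := true) rfl hmC)
    (hWT.notMem (s := true) rfl htD) (hWT.notMem (s := true) rfl htS₁)
    (hWT.notMem (s := true) rfl htS₂) hEM rfl rfl hET hMT (h.2.2.2.1 δ hδ) (h.2.2.2.1 δ hδ)
    fun a ha b hb hab => ?_
  rcases mem_insert_insert.mp ha with rfl | rfl | haR <;>
    rcases mem_insert_insert.mp hb with rfl | rfl | hbR
  · exact absurd hab hET.symm
  · exact absurd hab hMT.symm
  · exact ((hWT.lt_iff hbR (s := false) hab.symm htD htS₁).2).mp (h₅ δ hδ b (hRC hbR) hab)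
  · exact absurd hab hET.symm
  · exact absurd hab hMT.symm
  · exact ((hWT.lt_iff hbR (s := false) hab.symm htD htS₂).2).mp (h₅ δ hδ b (hRC hbR) hab)
  · exact ((hWE.lt_iff haR (s := true) hab heC heS).1).mp (h₅ a (hRC haR) γ hγ hab)
  · exact ((hWM.lt_iff haR (s := true) hab hmD hmS).1).mp (h₅ a (hRC haR) δ hδ hab)
  · exact h₅ a (hRC haR) b (hRC hbR) hab

theorem IsPlanarTreeDiagram.sibling_of_chain (hj : j ∉ I) (hEM : E ≠ M) (hMT : M ≠ T)
    (hET : E ≠ T) (hWE : AvoidsHull R E {eS, eC}) (hWM : AvoidsHull R M {mS, mC, mD})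
    (hWT : AvoidsHull R T {tS, tS', tD}) (horder : tS < tS' ↔ (E < M ↔ T < E))
    (h : IsPlanarTreeDiagram I j (insert ⟨E, eC, M, mC, sC⟩ (insert ⟨M, mD, T, tD, sB⟩ R))) :
    IsPlanarTreeDiagram I j (insert ⟨E, eS, T, tS, sA⟩ (insert ⟨M, mS, T, tS', sB⟩ R)) := by
  have htS₁ : tS ∈ ({tS, tS', tD} : Finset ℚ) := by simp
  have htS₂ : tS' ∈ ({tS, tS', tD} : Finset ℚ) := by simp
  have htD : tD ∈ ({tS, tS', tD} : Finset ℚ) := by simp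
  have hord := fun {k k'} => h.chain_subtrees_ordered (eS := eS) (tS := tS) (mS := mS)
    (tS' := tS') (sA := sA) (k := k) (k' := k') hj hEM hMT (hWM.subset_positions (by simp))
  set α : GArrow n := ⟨E, eS, T, tS, sA⟩
  set β : GArrow n := ⟨M, mS, T, tS', sB⟩
  set γ : GArrow n := ⟨E, eC, M, mC, sC⟩
  set δ : GArrow n := ⟨M, mD, T, tD, sB⟩
  obtain ⟨hT, -, hsideC, hpairC⟩ := id h
  have hγ : γ ∈ insert γ (insert δ R) := mem_insert_self _ _
  have hδ : δ ∈ insert γ (insert δ R) := mem_insert_of_mem (mem_insert_self _ _)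
  have hRC : ∀ {r}, r ∈ R → r ∈ insert γ (insert δ R) := fun hr => subset_insert_insert _ _ _ hr
  have hRM : ∀ r ∈ R, r.tailStr ≠ M := fun r hr =>
    hT.tailStr_ne (hRC hr) hδ (ne_of_mem_of_not_mem hr (hWT.notMem (s := true) rfl htD))
  have hup : ∀ {a k}, Descends (insert α (insert β R)) a k → Descends (insert γ (insert δ R)) a k :=
    descends_chain_of_descends_sibling
  have hEk : ∀ {k}, Descends (insert α (insert β R)) E k → Descends (insert γ (insert δ R)) M k :=
    fun hk => .head (parentRel_of_mem hγ) (hup hk)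
  have hMTE : M < T ↔ E < T := h.chain_side
  have hTME : T < M ↔ T < E := lt_iff_lt_of_lt_iff_lt hMTE hMT hET
  refine ⟨hT.sibling_of_chain hEM hMT hET hWE hWM hWT, fun i hi => ?_,
    fun a ha k hk => ?_, fun a ha b hb hH hlt k k' hk hk' => ?_⟩
  · have hjM : j ≠ M := fun e => hj (e ▸ hT.2.2.1 δ hδ)
    exact transGen_of_descends ((descends_sibling_of_descends_chain hEM hRM
      (h.2.1 i hi).to_reflTransGen).resolve_right fun h => hjM h.1) fun e => hj (e ▸ hi)
  · rcases mem_insert_insert.mp ha with rfl | rfl | haR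
    · exact hMTE.symm.trans (hsideC δ hδ k (hEk hk))
    · exact hsideC δ hδ k (hup hk)
    · exact hsideC a (hRC haR) k (hup hk)
  rcases mem_insert_insert.mp ha with rfl | rfl | haR <;>
    rcases mem_insert_insert.mp hb with rfl | rfl | hbR
  · exact absurd hlt (lt_irrefl _)
  · have hP := horder.mp hlt
    exact ⟨fun hl _ => (hord hk hk').2 (hEM.lt_or_gt.resolve_left fun h => hl.asymm (hP.mp h)),
      fun hr _ => (hord hk hk').1 (hP.mpr hr)⟩
  · have hpair := hpairC δ hδ b (hRC hbR) hH
      (((hWT.lt_iff hbR (s := true) hH.symm htS₁ htD).2).mp hlt) k k' (hEk hk) (hup hk')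
    exact ⟨fun h₁ => hpair.1 (hMTE.mpr h₁), fun h₁ => hpair.2 (hTME.mpr h₁)⟩
  · have hP : ¬(E < M ↔ T < E) := fun hP => hlt.asymm (horder.mpr hP)
    exact ⟨fun _ hl => (hord hk' hk).1 (by_contra fun h => hP (iff_of_false h hl.asymm)),
      fun _ hr => (hord hk' hk).2 (hEM.lt_or_gt.resolve_left fun h => hP (iff_of_true h hr))⟩
  · exact absurd hlt (lt_irrefl _)
  · exact hpairC δ hδ b (hRC hbR) hH
      (((hWT.lt_iff hbR (s := true) hH.symm htS₂ htD).2).mp hlt) k k' (hup hk) (hup hk')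
  · have hpair := hpairC a (hRC haR) δ hδ hH
      (((hWT.lt_iff haR (s := true) hH htS₁ htD).1).mp hlt) k k' (hup hk) (hEk hk')
    exact ⟨fun h₁ h₂ => hpair.1 h₁ (hMTE.mpr h₂), fun h₁ h₂ => hpair.2 h₁ (hTME.mpr h₂)⟩
  · exact hpairC a (hRC haR) δ hδ hH
      (((hWT.lt_iff haR (s := true) hH htS₂ htD).1).mp hlt) k k' (hup hk) (hup hk')
  · exact hpairC a (hRC haR) b (hRC hbR) hH hlt k k' (hup hk) (hup hk')

theorem isPlanarTreeDiagram_sibling_iff_chain (hj : j ∉ I) (hEM : E ≠ M) (hMT : M ≠ T)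
    (hET : E ≠ T) (hWE : AvoidsHull R E {eS, eC}) (hWM : AvoidsHull R M {mS, mC, mD})
    (hWT : AvoidsHull R T {tS, tS', tD}) (htS : tS ≠ tS') (hmCD : mC < mD)
    (hside : E < T ↔ M < T) (horder : tS < tS' ↔ (E < M ↔ T < E)) :
    IsPlanarTreeDiagram I j (insert ⟨E, eS, T, tS, sA⟩ (insert ⟨M, mS, T, tS', sB⟩ R)) ↔
      IsPlanarTreeDiagram I j (insert ⟨E, eC, M, mC, sC⟩ (insert ⟨M, mD, T, tD, sB⟩ R)) :=
  ⟨(·.chain_of_sibling hj hEM hMT hET hWE hWM hWT htS hmCD hside),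
    (·.sibling_of_chain hj hEM hMT hET hWE hWM hWT horder)⟩

end Transfer

section Swap

variable {n : ℕ} {I : Finset (Fin n)} {j : Fin n} {E M T : Fin n} {R : Finset (GArrow n)}
  {eS tS mS tS' eS₂ tS₂ mS₂ tS₂' : ℚ} {sA sB : ℤ}

lemma IsTreeDiagram.sibling_swap (hEM : E ≠ M) (hMT : M ≠ T) (hET : E ≠ T)
    (hWE : AvoidsHull R E {eS, eS₂}) (hWM : AvoidsHull R M {mS, mS₂})
    (hWT : AvoidsHull R T {tS, tS', tS₂, tS₂'})
    (h : IsTreeDiagram I j (insert ⟨E, eS, T, tS, sA⟩ (insert ⟨M, mS, T, tS', sB⟩ R))) :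
    IsTreeDiagram I j (insert ⟨E, eS₂, T, tS₂, sA⟩ (insert ⟨M, mS₂, T, tS₂', sB⟩ R)) := by
  have htS₁ : tS ∈ ({tS, tS', tS₂, tS₂'} : Finset ℚ) := by simp
  have htS₂ : tS' ∈ ({tS, tS', tS₂, tS₂'} : Finset ℚ) := by simp
  have htS₃ : tS₂ ∈ ({tS, tS', tS₂, tS₂'} : Finset ℚ) := by simp
  have htS₄ : tS₂' ∈ ({tS, tS', tS₂, tS₂'} : Finset ℚ) := by simp
  set α : GArrow n := ⟨E, eS, T, tS, sA⟩
  set β : GArrow n := ⟨M, mS, T, tS', sB⟩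
  have hα : α ∈ insert α (insert β R) := mem_insert_self _ _
  have hβ : β ∈ insert α (insert β R) := mem_insert_of_mem (mem_insert_self _ _)
  have hRS : ∀ {r}, r ∈ R → r ∈ insert α (insert β R) := fun hr => subset_insert_insert _ _ _ hr
  have h₅ := h.2.2.2.2
  refine h.insert_insert_replace (hWT.notMem (s := true) rfl htS₁)
    (hWT.notMem (s := true) rfl htS₂) (hWT.notMem (s := true) rfl htS₃)
    (hWT.notMem (s := true) rfl htS₄) hEM rfl rfl hET hMT (h.2.2.2.1 α hα) (h.2.2.2.1 α hα)
    fun a ha b hb hab => ?_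
  rcases mem_insert_insert.mp ha with rfl | rfl | haR <;>
    rcases mem_insert_insert.mp hb with rfl | rfl | hbR
  · exact absurd hab hET.symm
  · exact absurd hab hMT.symm
  · exact ((hWT.lt_iff hbR (s := false) hab.symm htS₁ htS₃).2).mp (h₅ α hα b (hRS hbR) hab)
  · exact absurd hab hET.symm
  · exact absurd hab hMT.symm
  · exact ((hWT.lt_iff hbR (s := false) hab.symm htS₂ htS₄).2).mp (h₅ β hβ b (hRS hbR) hab)
  · exact ((hWE.lt_iff_pair haR (s := true) hab).1).mp (h₅ a (hRS haR) α hα hab)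
  · exact ((hWM.lt_iff_pair haR (s := true) hab).1).mp (h₅ a (hRS haR) β hβ hab)
  · exact h₅ a (hRS haR) b (hRS hbR) hab

/-- Two siblings hanging on opposite sides of `T` impose no order on their heads. -/
theorem IsPlanarTreeDiagram.sibling_swap (hEM : E ≠ M) (hMT : M ≠ T) (hET : E ≠ T)
    (hWE : AvoidsHull R E {eS, eS₂}) (hWM : AvoidsHull R M {mS, mS₂})
    (hWT : AvoidsHull R T {tS, tS', tS₂, tS₂'}) (hopp : ¬(E < T ↔ M < T))
    (h : IsPlanarTreeDiagram I j (insert ⟨E, eS, T, tS, sA⟩ (insert ⟨M, mS, T, tS', sB⟩ R))) :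
    IsPlanarTreeDiagram I j (insert ⟨E, eS₂, T, tS₂, sA⟩ (insert ⟨M, mS₂, T, tS₂', sB⟩ R)) := by
  have htS₁ : tS ∈ ({tS, tS', tS₂, tS₂'} : Finset ℚ) := by simp
  have htS₂ : tS' ∈ ({tS, tS', tS₂, tS₂'} : Finset ℚ) := by simp
  have htS₃ : tS₂ ∈ ({tS, tS', tS₂, tS₂'} : Finset ℚ) := by simp
  have htS₄ : tS₂' ∈ ({tS, tS', tS₂, tS₂'} : Finset ℚ) := by simp
  set α : GArrow n := ⟨E, eS, T, tS, sA⟩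
  set β : GArrow n := ⟨M, mS, T, tS', sB⟩
  set α₂ : GArrow n := ⟨E, eS₂, T, tS₂, sA⟩
  set β₂ : GArrow n := ⟨M, mS₂, T, tS₂', sB⟩
  have hP : ParentRel (insert α₂ (insert β₂ R)) = ParentRel (insert α (insert β R)) := by
    funext s t
    simp only [parentRel_insert, α, β, α₂, β₂]
  have hD : Descends (insert α₂ (insert β₂ R)) = Descends (insert α (insert β R)) := by
    rw [Descends, Descends, hP]
  obtain ⟨hT, hreach, hsideS, hpairS⟩ := h
  have hα : α ∈ insert α (insert β R) := mem_insert_self _ _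
  have hβ : β ∈ insert α (insert β R) := mem_insert_of_mem (mem_insert_self _ _)
  have hRS : ∀ {r}, r ∈ R → r ∈ insert α (insert β R) := fun hr => subset_insert_insert _ _ _ hr
  have hvac : ¬((E < T ∧ M < T) ∨ (T < E ∧ T < M)) := by
    rintro (⟨h₁, h₂⟩ | ⟨h₁, h₂⟩)
    · exact hopp (iff_of_true h₁ h₂)
    · exact hopp (iff_of_false h₁.asymm h₂.asymm)
  refine ⟨hT.sibling_swap hEM hMT hET hWE hWM hWT, by rw [hP]; exact hreach,
    fun a ha k hk => ?_, fun a ha b hb hH hlt k k' hk hk' => ?_⟩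
  · rw [hD] at hk
    rcases mem_insert_insert.mp ha with rfl | rfl | haR
    · exact hsideS α hα k hk
    · exact hsideS β hβ k hk
    · exact hsideS a (hRS haR) k hk
  rw [hD] at hk hk'
  rcases mem_insert_insert.mp ha with rfl | rfl | haR <;>
    rcases mem_insert_insert.mp hb with rfl | rfl | hbR
  · exact absurd hlt (lt_irrefl _)
  · exact ⟨fun h₁ h₂ => absurd (.inl ⟨h₁, h₂⟩) hvac, fun h₁ h₂ => absurd (.inr ⟨h₁, h₂⟩) hvac⟩
  · exact hpairS α hα b (hRS hbR) hH
      (((hWT.lt_iff hbR (s := true) hH.symm htS₃ htS₁).2).mp hlt) k k' hk hk'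
  · exact ⟨fun h₁ h₂ => absurd (.inl ⟨h₂, h₁⟩) hvac, fun h₁ h₂ => absurd (.inr ⟨h₂, h₁⟩) hvac⟩
  · exact absurd hlt (lt_irrefl _)
  · exact hpairS β hβ b (hRS hbR) hH
      (((hWT.lt_iff hbR (s := true) hH.symm htS₄ htS₂).2).mp hlt) k k' hk hk'
  · exact hpairS a (hRS haR) α hα hH
      (((hWT.lt_iff haR (s := true) hH htS₃ htS₁).1).mp hlt) k k' hk hk'
  · exact hpairS a (hRS haR) β hβ hH
      (((hWT.lt_iff haR (s := true) hH htS₄ htS₂).1).mp hlt) k k' hk hk'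
  · exact hpairS a (hRS haR) b (hRS hbR) hH hlt k k' hk hk'

end Swap

lemma ite_lt_swap {p q : ℚ} (h : p ≠ q) :
    (if q < p then (1 : ℤ) else -1) = -(if p < q then 1 else -1) := by
  rcases h.lt_or_gt with h | h <;> simp [h, h.asymm]

lemma orientation_mul_sign_eq {X Y Z W : Prop} [Decidable X] [Decidable Y] [Decidable Z]
    [Decidable W] {a c : ℤ} (ha : a = 1 ∨ a = -1) (hc : c = 1 ∨ c = -1) (hZ : Z ↔ (Y ↔ ¬X))
    (h : a * c = -((if Z then 1 else -1) * (if W then 1 else -1))) :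
    (if X then -1 else 1) * a = (if W then 1 else -1) * ((if Y then -1 else 1) * c) := by
  rcases ha with rfl | rfl <;> rcases hc with rfl | rfl <;> by_cases hX : X <;> by_cases hY : Y <;>
    by_cases hW : W <;> simp_all

section Exchange

variable {n : ℕ} {I : Finset (Fin n)} {j : Fin n} {E M T : Fin n} {R : Finset (GArrow n)}
  {e₁ e₂ m₁ m₂ t₁ t₂ : ℚ} {sA sB sC : ℤ}

lemma treeTerm_exchange_of_degenerate (hj : j ∉ I) (ht : t₁ ≠ t₂)
    (hdeg : E = M ∨ M = T ∨ E = T) :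
    treeTerm I j (insert ⟨E, e₁, T, t₁, sA⟩ (insert ⟨M, m₁, T, t₂, sB⟩ R)) +
        treeTerm I j (insert ⟨E, e₂, M, m₂, sC⟩ (insert ⟨M, m₁, T, t₂, sB⟩ R)) =
      treeTerm I j (insert ⟨E, e₂, T, t₂, sA⟩ (insert ⟨M, m₂, T, t₁, sB⟩ R)) +
        treeTerm I j (insert ⟨E, e₁, M, m₁, sC⟩ (insert ⟨M, m₂, T, t₁, sB⟩ R)) := by
  have h₁ : ∀ {a b : GArrow n}, a ∈ insert a (insert b R) := mem_insert_self _ _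
  have h₂ : ∀ {a b : GArrow n}, b ∈ insert a (insert b R) := mem_insert_of_mem (mem_insert_self _ _)
  rcases hdeg with hEM | hMT | hET
  · have hsib : ∀ {e t m t' : ℚ}, t ≠ t' →
        treeTerm I j (insert ⟨E, e, T, t, sA⟩ (insert ⟨M, m, T, t', sB⟩ R)) = 0 := fun htt =>
      treeTerm_eq_zero_of_tailStr_eq h₁ h₂ (fun e => htt (congrArg GArrow.headPos e)) hEM
    have hch : ∀ {e m m' t : ℚ},
        treeTerm I j (insert ⟨E, e, M, m, sC⟩ (insert ⟨M, m', T, t, sB⟩ R)) = 0 :=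
      treeTerm_eq_zero_of_tailStr_eq_headStr h₁ hEM
    rw [hsib ht, hsib ht.symm, hch, hch]
  · have hz : ∀ {a : GArrow n} {m t : ℚ}, treeTerm I j (insert a (insert ⟨M, m, T, t, sB⟩ R)) = 0 :=
      treeTerm_eq_zero_of_tailStr_eq_headStr h₂ hMT
    rw [hz, hz, hz, hz]
  · have hsib : ∀ {e t : ℚ} {S : Finset (GArrow n)}, treeTerm I j (insert ⟨E, e, T, t, sA⟩ S) = 0 :=
      treeTerm_eq_zero_of_tailStr_eq_headStr (mem_insert_self _ _) hET
    have hch : ∀ {e m m' t : ℚ},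
        treeTerm I j (insert ⟨E, e, M, m, sC⟩ (insert ⟨M, m', T, t, sB⟩ R)) = 0 := by
      intro e m m' t
      by_cases hEM : E = M
      · exact treeTerm_eq_zero_of_tailStr_eq_headStr h₁ hEM
      exact treeTerm_eq_zero_of_not_isPlanarTreeDiagram fun h => hEM (h.descends_antisymm hj
        (.single (hET ▸ parentRel_of_mem h₂)) (.single (parentRel_of_mem h₁)))
    rw [hsib, hsib, hch, hch]

lemma treeTerm_exchange_of_opposite_sides (hEM : E ≠ M) (hMT : M ≠ T) (hET : E ≠ T)
    (hWE : AvoidsHull R E {e₁, e₂}) (hWM : AvoidsHull R M {m₁, m₂})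
    (hWT : AvoidsHull R T {t₁, t₂}) (hside : ¬(E < T ↔ M < T)) :
    treeTerm I j (insert ⟨E, e₁, T, t₁, sA⟩ (insert ⟨M, m₁, T, t₂, sB⟩ R)) +
        treeTerm I j (insert ⟨E, e₂, M, m₂, sC⟩ (insert ⟨M, m₁, T, t₂, sB⟩ R)) =
      treeTerm I j (insert ⟨E, e₂, T, t₂, sA⟩ (insert ⟨M, m₂, T, t₁, sB⟩ R)) +
        treeTerm I j (insert ⟨E, e₁, M, m₁, sC⟩ (insert ⟨M, m₂, T, t₁, sB⟩ R)) := by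
  have hne : ∀ {a b : GArrow n}, a.tailStr = E → b.tailStr = M → a ≠ b :=
    fun ha hb e => hEM (ha ▸ hb ▸ congrArg GArrow.tailStr e)
  have hchain : ∀ {e m m' t : ℚ},
      treeTerm I j (insert ⟨E, e, M, m, sC⟩ (insert ⟨M, m', T, t, sB⟩ R)) = 0 :=
    treeTerm_eq_zero_of_not_isPlanarTreeDiagram fun h => hside h.chain_side.symm
  have hswap : IsPlanarTreeDiagram I j (insert ⟨E, e₁, T, t₁, sA⟩ (insert ⟨M, m₁, T, t₂, sB⟩ R)) ↔
      IsPlanarTreeDiagram I j (insert ⟨E, e₂, T, t₂, sA⟩ (insert ⟨M, m₂, T, t₁, sB⟩ R)) :=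
    ⟨(·.sibling_swap hEM hMT hET hWE hWM (hWT.subset_positions (by simp)) hside),
      (·.sibling_swap hEM hMT hET (pair_comm e₁ e₂ ▸ hWE) (pair_comm m₁ m₂ ▸ hWM)
        (hWT.subset_positions (by simp)) hside)⟩
  rw [hchain, hchain, treeTerm_insert_insert (hne rfl rfl) (hWT.notMem (s := true) rfl (by simp))
    (hWT.notMem (s := true) rfl (by simp)), treeTerm_insert_insert (hne rfl rfl)
    (hWT.notMem (s := true) rfl (by simp)) (hWT.notMem (s := true) rfl (by simp)), hswap]

/-- On the same side, only the sibling configuration whose head order matches the relative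
position of `E`, `M`, `T` can be planar, and it is planar exactly when the chain whose heads and
tails on `M` are in order is. -/
lemma treeTerm_exchange_of_same_side (hj : j ∉ I) (hEM : E ≠ M) (hMT : M ≠ T) (hET : E ≠ T)
    (hWE : AvoidsHull R E {e₁, e₂}) (hWM : AvoidsHull R M {m₁, m₂})
    (hWT : AvoidsHull R T {t₁, t₂}) (hm : m₁ ≠ m₂) (ht : t₁ ≠ t₂)
    (hsA : sA = 1 ∨ sA = -1) (hsC : sC = 1 ∨ sC = -1)
    (hsign : sA * sC = -((if t₁ < t₂ then 1 else -1) * (if m₁ < m₂ then 1 else -1)))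
    (hside : E < T ↔ M < T) (hZ : t₁ < t₂ ↔ (E < M ↔ T < E)) :
    treeTerm I j (insert ⟨E, e₁, T, t₁, sA⟩ (insert ⟨M, m₁, T, t₂, sB⟩ R)) +
        treeTerm I j (insert ⟨E, e₂, M, m₂, sC⟩ (insert ⟨M, m₁, T, t₂, sB⟩ R)) =
      treeTerm I j (insert ⟨E, e₂, T, t₂, sA⟩ (insert ⟨M, m₂, T, t₁, sB⟩ R)) +
        treeTerm I j (insert ⟨E, e₁, M, m₁, sC⟩ (insert ⟨M, m₂, T, t₁, sB⟩ R)) := by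
  have hne : ∀ {a b : GArrow n}, a.tailStr = E → b.tailStr = M → a ≠ b :=
    fun ha hb e => hEM (ha ▸ hb ▸ congrArg GArrow.tailStr e)
  have hS₂ : ¬IsPlanarTreeDiagram I j
      (insert ⟨E, e₂, T, t₂, sA⟩ (insert ⟨M, m₂, T, t₁, sB⟩ R)) := fun h => by
    have hZ₂ := h.sibling_order hEM hMT hET hside ht.symm
    rcases ht.lt_or_gt with h' | h'
    · exact h'.asymm (hZ₂.mpr (hZ.mp h'))
    · exact h'.asymm (hZ.mpr (hZ₂.mp h'))
  have key := orientation_mul_sign_eq (X := E < T) (Y := E < M) (W := m₁ < m₂) hsA hsC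
    (hZ.trans (iff_congr Iff.rfl (not_lt.trans (Ne.symm hET).le_iff_lt).symm)) hsign
  rw [treeTerm_eq_zero_of_not_isPlanarTreeDiagram hS₂, zero_add,
    treeTerm_insert_insert (hne rfl rfl) (hWT.notMem (s := true) rfl (by simp))
      (hWT.notMem (s := true) rfl (by simp))]
  rcases hm.lt_or_gt with hlt | hlt
  · have hiff : IsPlanarTreeDiagram I j (insert ⟨E, e₁, T, t₁, sA⟩ (insert ⟨M, m₁, T, t₂, sB⟩ R)) ↔
        IsPlanarTreeDiagram I j (insert ⟨E, e₁, M, m₁, sC⟩ (insert ⟨M, m₂, T, t₁, sB⟩ R)) :=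
      isPlanarTreeDiagram_sibling_iff_chain hj hEM hMT hET (hWE.subset_positions (by simp))
        (hWM.subset_positions (by simp)) (hWT.subset_positions (by simp)) ht hlt hside hZ
    rw [treeTerm_eq_zero_of_not_isPlanarTreeDiagram fun h => hlt.asymm h.chain_headPos_lt,
      treeTerm_insert_insert (hne rfl rfl) (hWM.notMem (s := true) rfl (by simp))
        (hWT.notMem (s := true) rfl (by simp)), hiff, add_zero]
    rw [if_pos hlt, one_mul] at key
    dsimp only
    by_cases hP : IsPlanarTreeDiagram I j
      (insert ⟨E, e₁, M, m₁, sC⟩ (insert ⟨M, m₂, T, t₁, sB⟩ R))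
    · rw [if_pos hP, if_pos hP, key]
    · rw [if_neg hP, if_neg hP]
  · have hiff : IsPlanarTreeDiagram I j (insert ⟨E, e₁, T, t₁, sA⟩ (insert ⟨M, m₁, T, t₂, sB⟩ R)) ↔
        IsPlanarTreeDiagram I j (insert ⟨E, e₂, M, m₂, sC⟩ (insert ⟨M, m₁, T, t₂, sB⟩ R)) :=
      isPlanarTreeDiagram_sibling_iff_chain hj hEM hMT hET (hWE.subset_positions (by simp))
        (hWM.subset_positions (by simp)) (hWT.subset_positions (by simp)) ht hlt hside hZ
    rw [treeTerm_eq_zero_of_not_isPlanarTreeDiagram fun h => hlt.asymm h.chain_headPos_lt,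
      treeTerm_insert_insert (hne rfl rfl) (hWM.notMem (s := true) rfl (by simp))
        (hWT.notMem (s := true) rfl (by simp)), ← hiff]
    rw [if_neg hlt.asymm] at key
    dsimp only
    by_cases hP : IsPlanarTreeDiagram I j
      (insert ⟨E, e₁, T, t₁, sA⟩ (insert ⟨M, m₁, T, t₂, sB⟩ R))
    · rw [if_pos hP, if_pos hP, key]
      ring
    · rw [if_neg hP, if_neg hP, add_zero]

theorem treeTerm_exchange (hj : j ∉ I) (hWE : AvoidsHull R E {e₁, e₂})
    (hWM : AvoidsHull R M {m₁, m₂}) (hWT : AvoidsHull R T {t₁, t₂}) (hm : m₁ ≠ m₂)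
    (ht : t₁ ≠ t₂) (hsA : sA = 1 ∨ sA = -1) (hsC : sC = 1 ∨ sC = -1)
    (hsign : sA * sC = -((if t₁ < t₂ then 1 else -1) * (if m₁ < m₂ then 1 else -1))) :
    treeTerm I j (insert ⟨E, e₁, T, t₁, sA⟩ (insert ⟨M, m₁, T, t₂, sB⟩ R)) +
        treeTerm I j (insert ⟨E, e₂, M, m₂, sC⟩ (insert ⟨M, m₁, T, t₂, sB⟩ R)) =
      treeTerm I j (insert ⟨E, e₂, T, t₂, sA⟩ (insert ⟨M, m₂, T, t₁, sB⟩ R)) +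
        treeTerm I j (insert ⟨E, e₁, M, m₁, sC⟩ (insert ⟨M, m₂, T, t₁, sB⟩ R)) := by
  by_cases hdeg : E = M ∨ M = T ∨ E = T
  · exact treeTerm_exchange_of_degenerate hj ht hdeg
  obtain ⟨hEM, hMT, hET⟩ : E ≠ M ∧ M ≠ T ∧ E ≠ T := by tauto
  by_cases hside : E < T ↔ M < T
  swap
  · exact treeTerm_exchange_of_opposite_sides hEM hMT hET hWE hWM hWT hside
  wlog hZ : t₁ < t₂ ↔ (E < M ↔ T < E) generalizing e₁ e₂ m₁ m₂ t₁ t₂ with H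
  · have hZ' : t₂ < t₁ ↔ (E < M ↔ T < E) := by
      rcases ht.lt_or_gt with h | h
      · exact iff_of_false h.asymm fun hP => hZ (iff_of_true h hP)
      · exact iff_of_true h (by_contra fun hP => hZ (iff_of_false h.asymm hP))
    refine (H (pair_comm e₁ e₂ ▸ hWE) (pair_comm m₁ m₂ ▸ hWM) (pair_comm t₁ t₂ ▸ hWT) hm.symm
      ht.symm ?_ hZ').symm
    rw [ite_lt_swap ht, ite_lt_swap hm, neg_mul_neg]
    exact hsign
  exact treeTerm_exchange_of_same_side hj hEM hMT hET hWE hWM hWT hm ht hsA hsC hsign hside hZ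

end Exchange

lemma sum_powerset_insert_insert_insert {α β : Type*} [DecidableEq α] [AddCommMonoid β]
    {a b c : α} {s : Finset α} (ha : a ∉ insert b (insert c s)) (hb : b ∉ insert c s)
    (hc : c ∉ s) (f : Finset α → β) :
    ∑ t ∈ (insert a (insert b (insert c s))).powerset, f t =
      ∑ t ∈ s.powerset, (f t + f (insert c t) + f (insert b t) + f (insert b (insert c t)) +
        f (insert a t) + f (insert a (insert c t)) + f (insert a (insert b t)) +
        f (insert a (insert b (insert c t)))) := by
  simp only [sum_powerset_insert ha, sum_powerset_insert hb, sum_powerset_insert hc,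
    ← sum_add_distrib]
  exact sum_congr rfl fun t _ => by abel

section ThirdMove

variable {n : ℕ} {I : Finset (Fin n)} {j : Fin n} {E M T : Fin n} {R : Finset (GArrow n)}
  {e₁ e₂ m₁ m₂ t₁ t₂ : ℚ} {sA sB sC : ℤ}

lemma treeTerm_triangle {A B C A' B' C' : GArrow n} (hA : A = ⟨E, e₁, T, t₁, sA⟩)
    (hB : B = ⟨M, m₁, T, t₂, sB⟩) (hC : C = ⟨E, e₂, M, m₂, sC⟩) (hA' : A' = ⟨E, e₂, T, t₂, sA⟩)
    (hB' : B' = ⟨M, m₂, T, t₁, sB⟩) (hC' : C' = ⟨E, e₁, M, m₁, sC⟩) (hj : j ∉ I)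
    (hWE : AvoidsHull R E {e₁, e₂}) (hWM : AvoidsHull R M {m₁, m₂})
    (hWT : AvoidsHull R T {t₁, t₂}) (he : e₁ ≠ e₂) (hm : m₁ ≠ m₂) (ht : t₁ ≠ t₂)
    (hsA : sA = 1 ∨ sA = -1) (hsB : sB = 1 ∨ sB = -1) (hsC : sC = 1 ∨ sC = -1)
    (hsign : sA * sC = -((if t₁ < t₂ then 1 else -1) * (if m₁ < m₂ then 1 else -1))) :
    treeTerm I j R + treeTerm I j (insert C R) + treeTerm I j (insert B R) +
        treeTerm I j (insert B (insert C R)) + treeTerm I j (insert A R) +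
        treeTerm I j (insert A (insert C R)) + treeTerm I j (insert A (insert B R)) +
        treeTerm I j (insert A (insert B (insert C R))) =
      treeTerm I j R + treeTerm I j (insert C' R) + treeTerm I j (insert B' R) +
        treeTerm I j (insert B' (insert C' R)) + treeTerm I j (insert A' R) +
        treeTerm I j (insert A' (insert C' R)) + treeTerm I j (insert A' (insert B' R)) +
        treeTerm I j (insert A' (insert B' (insert C' R))) := by
  subst hA hB hC hA' hB' hC'
  have hne : ∀ {s : ℤ}, s = 1 ∨ s = -1 → s ≠ 0 := by rintro s (rfl | rfl) <;> decide
  have eA := treeTerm_insert_replace_of_sign_eq (I := I) (j := j) (x := ⟨E, e₁, T, t₁, sA⟩)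
    (y := ⟨E, e₂, T, t₂, sA⟩)
    (hWT.notMem (s := true) rfl (by simp)) (hWT.notMem (s := true) rfl (by simp)) rfl rfl rfl
    (hne hsA) hWE hWT
  have eB := treeTerm_insert_replace_of_sign_eq (I := I) (j := j) (x := ⟨M, m₁, T, t₂, sB⟩)
    (y := ⟨M, m₂, T, t₁, sB⟩)
    (hWT.notMem (s := true) rfl (by simp)) (hWT.notMem (s := true) rfl (by simp)) rfl rfl rfl
    (hne hsB) hWM (pair_comm t₁ t₂ ▸ hWT)
  have eC := treeTerm_insert_replace_of_sign_eq (I := I) (j := j) (x := ⟨E, e₂, M, m₂, sC⟩)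
    (y := ⟨E, e₁, M, m₁, sC⟩)
    (hWM.notMem (s := true) rfl (by simp)) (hWM.notMem (s := true) rfl (by simp)) rfl rfl rfl
    (hne hsC) (pair_comm e₁ e₂ ▸ hWE) (pair_comm m₁ m₂ ▸ hWM)
  have zero : ∀ {e e' t m : ℚ} {S : Finset (GArrow n)}, e ≠ e' →
      treeTerm I j (insert ⟨E, e, T, t, sA⟩ (insert ⟨E, e', M, m, sC⟩ S)) = 0 := fun hee =>
    treeTerm_eq_zero_of_tailStr_eq (mem_insert_self _ _) (mem_insert_of_mem (mem_insert_self _ _))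
      (fun h => hee (congrArg GArrow.tailPos h)) rfl
  have zero₃ : ∀ {e e' t m : ℚ} {b : GArrow n}, e ≠ e' →
      treeTerm I j (insert ⟨E, e, T, t, sA⟩ (insert b (insert ⟨E, e', M, m, sC⟩ R))) = 0 :=
    by intro e e' t m b hee; rw [insert_comm b, zero hee]
  have hex := treeTerm_exchange (I := I) (j := j) (sB := sB) hj hWE hWM hWT hm ht hsA hsC hsign
  rw [zero he, zero he.symm, zero₃ he, zero₃ he.symm,
    insert_comm (⟨M, m₁, T, t₂, sB⟩ : GArrow n), insert_comm (⟨M, m₂, T, t₁, sB⟩ : GArrow n)]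
  linarith

end ThirdMove

theorem Z_eq_of_triangle_move {n : ℕ} {I : Finset (Fin n)} {j : Fin n} {G G' : GaussDiagram n}
    (hj : j ∉ I) {E M T : Fin n} {e₁ e₂ m₁ m₂ t₁ t₂ : ℚ} {sA sB sC : ℤ}
    (hA : ⟨E, e₁, T, t₁, sA⟩ ∈ G.arrows) (hB : ⟨M, m₁, T, t₂, sB⟩ ∈ G.arrows)
    (hC : ⟨E, e₂, M, m₂, sC⟩ ∈ G.arrows) (hE : IsAdjacentPair G E e₁ e₂)
    (hM : IsAdjacentPair G M m₁ m₂) (hT : IsAdjacentPair G T t₁ t₂)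
    (hsign : sA * sC = -((if t₁ < t₂ then 1 else -1) * (if m₁ < m₂ then 1 else -1)))
    (hG' : G'.arrows = ((G.arrows.erase ⟨E, e₁, T, t₁, sA⟩).erase ⟨M, m₁, T, t₂, sB⟩).erase
      ⟨E, e₂, M, m₂, sC⟩ ∪ {⟨E, e₂, T, t₂, sA⟩, ⟨M, m₂, T, t₁, sB⟩, ⟨E, e₁, M, m₁, sC⟩}) :
    Z I j G = Z I j G' := by
  set A : GArrow n := ⟨E, e₁, T, t₁, sA⟩
  set B : GArrow n := ⟨M, m₁, T, t₂, sB⟩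
  set C : GArrow n := ⟨E, e₂, M, m₂, sC⟩
  set A' : GArrow n := ⟨E, e₂, T, t₂, sA⟩
  set B' : GArrow n := ⟨M, m₂, T, t₁, sB⟩
  set C' : GArrow n := ⟨E, e₁, M, m₁, sC⟩
  set R₀ := ((G.arrows.erase A).erase B).erase C
  have hR₀ : R₀ ⊆ G.arrows := ((erase_subset _ _).trans (erase_subset _ _)).trans (erase_subset _ _)
  have hG'₀ : G'.arrows = insert A' (insert B' (insert C' R₀)) := by
    rw [hG', union_comm, insert_union, insert_union, ← insert_eq]
  have hA' : A' ∈ G'.arrows := hG'₀ ▸ mem_insert_self _ _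
  have hC' : C' ∈ G'.arrows := hG'₀ ▸ mem_insert_of_mem (mem_insert_of_mem (mem_insert_self _ _))
  have hAB : A ≠ B := fun h => hT.1 (congrArg GArrow.headPos h)
  have hAC : A ≠ C := fun h => hE.1 (congrArg GArrow.tailPos h)
  have hBC : B ≠ C := fun h => G'.tail_ne_head hA' hC'
    (Prod.ext (congrArg GArrow.tailStr h).symm (congrArg GArrow.tailPos h).symm)
  have hA'B' : A' ≠ B' := fun h => hT.1 (congrArg GArrow.headPos h).symm
  have hA'C' : A' ≠ C' := fun h => hE.1 (congrArg GArrow.tailPos h).symm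
  have hB'C' : B' ≠ C' := fun h => G.tail_ne_head hA hC
    (Prod.ext (congrArg GArrow.tailStr h).symm (congrArg GArrow.tailPos h).symm)
  have hA₀ : A ∉ R₀ := by simp [R₀]
  have hB₀ : B ∉ R₀ := by simp [R₀]
  have hC₀ : C ∉ R₀ := by simp [R₀]
  have hA'₀ : A' ∉ R₀ := G.notMem_of_ep_eq hR₀ hB hB₀ (s := true) (t := true) rfl
  have hB'₀ : B' ∉ R₀ := G.notMem_of_ep_eq hR₀ hA hA₀ (s := true) (t := true) rfl
  have hC'₀ : C' ∉ R₀ := G.notMem_of_ep_eq hR₀ hA hA₀ (s := false) (t := false) rfl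
  have hG₀ : insert A (insert B (insert C R₀)) = G.arrows := by
    rw [insert_erase (mem_erase.mpr ⟨hBC.symm, mem_erase.mpr ⟨hAC.symm, hC⟩⟩),
      insert_erase (mem_erase.mpr ⟨hAB.symm, hB⟩), insert_erase hA]
  have notin : ∀ {x y : GArrow n} {S}, x ≠ y → x ∉ S → x ∉ insert y S :=
    fun hxy hx h => (mem_insert.mp h).elim hxy hx
  have hWE := hE.avoidsHull hR₀ hA hC hA₀ hC₀ (s := false) (t := false) rfl rfl
  have hWM := hM.avoidsHull hR₀ hB hC hB₀ hC₀ (s := false) (t := true) rfl rfl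
  have hWT := hT.avoidsHull hR₀ hA hB hA₀ hB₀ (s := true) (t := true) rfl rfl
  rw [Z_eq_sum_treeTerm, Z_eq_sum_treeTerm, ← hG₀, hG'₀,
    sum_powerset_insert_insert_insert (notin hAB (notin hAC hA₀)) (notin hBC hB₀) hC₀,
    sum_powerset_insert_insert_insert (notin hA'B' (notin hA'C' hA'₀)) (notin hB'C' hB'₀) hC'₀]
  refine sum_congr rfl fun R hR => ?_
  have hRR₀ : R ⊆ R₀ := mem_powerset.mp hR
  exact treeTerm_triangle rfl rfl rfl rfl rfl rfl hj (hWE.subset_arrows hRR₀)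
    (hWM.subset_arrows hRR₀) (hWT.subset_arrows hRR₀) hE.1 hM.1 hT.1 (G.sign_pm A hA)
    (G.sign_pm B hB) (G.sign_pm C hC) hsign

lemma ite_lt_eq_bsign {b : Bool} {p q : ℚ} (h : if b then p < q else q < p) :
    (if p < q then (1 : ℤ) else -1) = bsign b := by
  cases b
  · simp only [Bool.false_eq_true, ↓reduceIte] at h
    simp [bsign, h.asymm]
  · simp only [↓reduceIte] at h
    simp [bsign, h]

theorem Z_eq_of_omega3Rel {n : ℕ} {I : Finset (Fin n)} {j : Fin n} {G G' : GaussDiagram n}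
    (hj : j ∉ I) (h : Omega3Rel G G') : Z I j G = Z I j G' := by
  obtain ⟨sX, sY, sZ, xa, xb, ya, yc, zb, zc, u, w, ox, oy, oz, ha, hb, hc, hox, hoy, hoz,
    hX, hY, hZ, hG'⟩ := h
  have hσx := ite_lt_eq_bsign hox
  have hσy := ite_lt_eq_bsign hoy
  have hσz : (if zb < zc then (1 : ℤ) else -1) = -bsign oz := by
    rw [ite_lt_swap hZ.1.symm, ite_lt_eq_bsign hoz]
  cases u <;> cases w <;> simp only [mkDirArrow, Bool.false_eq_true, ↓reduceIte] at ha hb hc hG'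
  · refine Z_eq_of_triangle_move hj hb ha hc hZ hY hX.symm ?_ ?_
    · rw [ite_lt_swap hX.1, hσx, hσy]
      cases ox <;> cases oy <;> cases oz <;> decide
    · rw [hG', erase_right_comm (s := G.arrows), insert_comm]
  · refine Z_eq_of_triangle_move hj ha hb hc hY hZ hX ?_ hG'
    rw [hσx, hσz]
    cases ox <;> cases oy <;> cases oz <;> decide
  · refine Z_eq_of_triangle_move hj ha hc hb hX hZ.symm hY ?_ ?_
    · rw [hσy, ite_lt_swap hZ.1, hσz]
      cases ox <;> cases oy <;> cases oz <;> decide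
    · rw [hG', erase_right_comm (s := G.arrows.erase _), pair_comm]
  · refine Z_eq_of_triangle_move hj hb hc ha hX.symm hY.symm hZ ?_ ?_
    · rw [hσz, ite_lt_swap hY.1, hσy]
      cases ox <;> cases oy <;> cases oz <;> decide
    · rw [hG', erase_right_comm (s := G.arrows), erase_right_comm (s := G.arrows.erase _),
        insert_comm, pair_comm]

theorem Z_eq_of_reidMove {n : ℕ} {I : Finset (Fin n)} {j : Fin n} {G G' : GaussDiagram n}
    (hj : j ∉ I) (h : ReidMove G G') : Z I j G = Z I j G' := by
  rcases h with (h | h) | (h | h) | h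
  · exact Z_eq_of_omega1Del h
  · exact (Z_eq_of_omega1Del h).symm
  · exact Z_eq_of_omega2Del h
  · exact (Z_eq_of_omega2Del h).symm
  · exact Z_eq_of_omega3Rel hj h

theorem tree_invariant_is_invariant_general {n : ℕ}
    (I : Finset (Fin n)) (j : Fin n) (hj : j ∉ I) :
    (∀ G G' : GaussDiagram n, ReidMove G G' → Z I j G = Z I j G') ∧
    (∀ G G' : GaussDiagram n, Relation.EqvGen ReidMove G G' →
      Z I j G = Z I j G') := by
  refine ⟨fun _ _ => Z_eq_of_reidMove hj, fun _ _ h => ?_⟩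
  induction h with
  | rel _ _ h => exact Z_eq_of_reidMove hj h
  | refl => rfl
  | symm _ _ _ ih => exact ih.symm
  | trans _ _ _ _ _ ih₁ ih₂ => exact ih₁.trans ih₂

/-- **Invariance under Reidemeister moves.**  Fix `n ≥ 1`, a subset
`I ⊆ {1,…,n}` and `j ∉ I`.  If two Gauss diagrams on `n` strings are related by
a single Reidemeister move `Ω1`, `Ω2` or `Ω3`, then they have the same tree
invariant `Z_{I,j}`; consequently `Z_{I,j}` is well defined on ordered virtual
tangles on `n` strings, i.e. on equivalence classes of Gauss diagrams modulo
these moves (and in particular it is an isotopy invariant of ordered classical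
tangles). -/
theorem tree_invariant_is_invariant {n : ℕ} (hn : 1 ≤ n)
    (I : Finset (Fin n)) (j : Fin n) (hj : j ∉ I) :
    (∀ G G' : GaussDiagram n, ReidMove G G' → Z I j G = Z I j G') ∧
    (∀ G G' : GaussDiagram n, Relation.EqvGen ReidMove G G' →
      Z I j G = Z I j G') :=
  tree_invariant_is_invariant_general I j hj
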